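/- arXiv:1910.01397 — 9 statements merged into one kernel-verified Lean document; each statement's English description precedes it below -/
import Mathlib

section
/- A linearly ordered abelian group G is isomorphic, as an ordered group, to the additive group ℝ of the reals if and only if the underlying linear order of G is order-isomorphic to ℝ. -/
/-!
An order isomorphism with `ℝ` makes `G` Dedekind complete, hence archimedean, so by Hölder's
theorem `G` embeds into `ℝ` by an injective order-preserving homomorphism `f`. Since `G` is densely
ordered, the subgroup `range f` has no least positive element and is therefore dense in `ℝ`.
Composed with the order isomorphism, `f` becomes a monotone self-map of `ℝ` with dense range; such
a map is continuous and unbounded in both directions, hence onto.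
-/

open Set Filter Function

theorem archimedean_of_exists_isLUB {G : Type*} [AddCommGroup G] [LinearOrder G]
    [IsOrderedAddMonoid G] (h : ∀ s : Set G, s.Nonempty → BddAbove s → ∃ a, IsLUB s a) :
    Archimedean G := by
  refine ⟨fun x y hy => ?_⟩
  by_contra! hx
  obtain ⟨a, hub, hleast⟩ := h (range fun n : ℕ => n • y) (range_nonempty _)
    ⟨x, forall_mem_range.2 fun n => (hx n).le⟩
  have : a ≤ a - y := hleast <| forall_mem_range.2 fun n =>
    le_sub_iff_add_le.2 <| succ_nsmul y n ▸ hub ⟨n + 1, rfl⟩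
  exact hy.not_ge (le_sub_self_iff a |>.1 this)

theorem OrderIso.exists_isLUB {α β : Type*} [Preorder α] [ConditionallyCompleteLinearOrder β]
    (e : α ≃o β) {s : Set α} (hne : s.Nonempty) (hbdd : BddAbove s) : ∃ a, IsLUB s a :=
  ⟨e.symm (sSup (e '' s)),
    e.isLUB_image.1 (isLUB_csSup (hne.image e) (e.monotone.map_bddAbove hbdd))⟩

theorem Monotone.surjective_of_denseRange {α β : Type*} [ConditionallyCompleteLinearOrder α]
    [TopologicalSpace α] [OrderTopology α] [DenselyOrdered α] [LinearOrder β]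
    [TopologicalSpace β] [OrderTopology β] [DenselyOrdered β] [NoMaxOrder β] [NoMinOrder β]
    {f : α → β} (hf : Monotone f) (hd : DenseRange f) : Surjective f :=
  (hf.continuous_of_denseRange hd).surjective
    (tendsto_atTop_atTop_of_monotone hf fun b => by
      obtain ⟨_, ⟨a, rfl⟩, hba⟩ := hd.exists_ge b
      exact ⟨a, hba⟩)
    (tendsto_atBot_atBot_of_monotone hf fun b => by
      obtain ⟨_, ⟨a, rfl⟩, hab⟩ := hd.exists_le b
      exact ⟨a, hab⟩)

theorem OrderAddMonoidHom.denseRange_of_strictMono {G H : Type*} [AddCommGroup G]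
    [LinearOrder G] [IsOrderedAddMonoid G] [DenselyOrdered G] [Nontrivial G] [AddCommGroup H]
    [LinearOrder H] [IsOrderedAddMonoid H] [TopologicalSpace H] [OrderTopology H] [Archimedean H]
    (f : G →+o H) (hf : StrictMono f) : DenseRange f := by
  have hne : f.toAddMonoidHom.range ≠ ⊥ := by
    obtain ⟨x, hx⟩ := exists_ne (0 : G)
    refine AddSubgroup.ne_bot_iff_exists_ne_zero.2 ⟨⟨f x, x, rfl⟩, fun h => hx (hf.injective ?_)⟩
    simpa using congrArg Subtype.val h
  refine (f.toAddMonoidHom.range.dense_of_no_min hne ?_ :)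
  rintro ⟨_, ⟨⟨a, rfl⟩, ha⟩, hleast⟩
  have ha' : 0 < a := hf.lt_iff_lt.1 (by simpa using ha)
  obtain ⟨b, hb0, hba⟩ := exists_between ha'
  have hfb : f b ∈ {g | g ∈ f.toAddMonoidHom.range ∧ 0 < g} :=
    ⟨⟨b, rfl⟩, by simpa using hf hb0⟩
  exact (hf hba).not_ge (hleast hfb)

/-- A linearly ordered abelian group `G` is isomorphic, as an ordered group,
to the additive group `ℝ` iff the underlying linear order of `G` is order-isomorphic to `ℝ`. -/
theorem stmt_1 {G : Type*} [AddCommGroup G] [LinearOrder G] [IsOrderedAddMonoid G] :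
    (∃ f : G ≃+ ℝ, ∀ a b : G, a ≤ b ↔ f a ≤ f b) ↔ Nonempty (G ≃o ℝ) := by
  refine ⟨fun ⟨f, hf⟩ => ⟨⟨f.toEquiv, (hf _ _).symm⟩⟩, fun ⟨e⟩ => ?_⟩
  have : Archimedean G := archimedean_of_exists_isLUB fun _ => e.exists_isLUB
  have : DenselyOrdered G := (denselyOrdered_iff_of_orderIsoClass e).2 inferInstance
  have : Nontrivial G := e.toEquiv.nontrivial
  obtain ⟨f, hinj⟩ := Archimedean.exists_orderAddMonoidHom_real_injective G
  have hmono : StrictMono f := f.monotone'.strictMono_of_injective hinj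
  have hdense : DenseRange (f ∘ e.symm) := by
    rw [DenseRange, e.symm.surjective.range_comp]
    exact f.denseRange_of_strictMono hmono
  have hsurj : Surjective f :=
    ((hmono.monotone.comp e.symm.monotone).surjective_of_denseRange hdense).of_comp
  exact ⟨AddEquiv.ofBijective f ⟨hinj, hsurj⟩, fun a b => hmono.le_iff_le.symm⟩
end

section
/- In any odd involutive residuated chain (X, ≤, ∗, t), the set of all idempotent elements is finite if and only if the set of positive idempotent elements (idempotents x with x ≥ t) is finite. -/
/-!
Negation `¬x = x → t` maps negative idempotents to positive ones: if `x ≤ t` and `x ∗ x = x`, then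
`t ≤ ¬x`, which gives `¬x ≤ ¬x ∗ ¬x`, while `x ∗ (¬x ∗ ¬x) = (x ∗ ¬x) ∗ (x ∗ ¬x) ≤ t` gives
`¬x ∗ ¬x ≤ ¬x`. Since `¬¬x = x`, every negative idempotent is the negation of a positive one, so
the idempotents are covered by the positive ones together with their image under `¬`.
-/

section ResiduatedChain

variable {X : Type*} {star res : X → X → X} {t : X}

theorem star_le_star_of_le [Preorder X] (hcomm : ∀ x y, star x y = star y x)
    (hadj : ∀ x z v, star x v ≤ z ↔ v ≤ res x z) {a b : X} (c : X) (hab : a ≤ b) :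
    star a c ≤ star b c := by
  rw [hcomm a c, hadj]
  exact hab.trans ((hadj c _ b).mp (hcomm c b).le)

theorem star_res_le [Preorder X] (hadj : ∀ x z v, star x v ≤ z ↔ v ≤ res x z) (x z : X) :
    star x (res x z) ≤ z :=
  (hadj x z _).mpr le_rfl

theorem le_res_self_of_le [Preorder X] (hunit : ∀ x, star x t = x)
    (hadj : ∀ x z v, star x v ≤ z ↔ v ≤ res x z) {x : X} (hx : x ≤ t) : t ≤ res x t := by
  rw [← hadj, hunit]
  exact hx

theorem le_star_self_of_le [Preorder X] (hcomm : ∀ x y, star x y = star y x)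
    (hunit : ∀ x, star x t = x) (hadj : ∀ x z v, star x v ≤ z ↔ v ≤ res x z) {n : X}
    (hn : t ≤ n) : n ≤ star n n :=
  calc n = star t n := by rw [hcomm, hunit]
    _ ≤ star n n := star_le_star_of_le hcomm hadj n hn

theorem star_res_self_le_of_idempotent [Preorder X] (hcomm : ∀ x y, star x y = star y x)
    (hassoc : ∀ x y z, star (star x y) z = star x (star y z)) (hunit : ∀ x, star x t = x)
    (hadj : ∀ x z v, star x v ≤ z ↔ v ≤ res x z) {x : X} (hx : star x x = x) :
    star (res x t) (res x t) ≤ res x t := by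
  set n := res x t
  rw [← hadj]
  calc star x (star n n) = star (star x x) (star n n) := by rw [hx]
    _ = star (star x n) (star x n) := by
      rw [hassoc, ← hassoc x n n, hcomm (star x n) n, ← hassoc, ← hassoc, hcomm x n]
    _ ≤ star t (star x n) := star_le_star_of_le hcomm hadj _ (star_res_le hadj x t)
    _ = star x n := by rw [hcomm, hunit]
    _ ≤ t := star_res_le hadj x t

theorem star_res_self_eq_of_idempotent_of_le [PartialOrder X]
    (hcomm : ∀ x y, star x y = star y x)
    (hassoc : ∀ x y z, star (star x y) z = star x (star y z)) (hunit : ∀ x, star x t = x)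
    (hadj : ∀ x z v, star x v ≤ z ↔ v ≤ res x z) {x : X} (hx : star x x = x) (hxt : x ≤ t) :
    star (res x t) (res x t) = res x t :=
  (star_res_self_le_of_idempotent hcomm hassoc hunit hadj hx).antisymm
    (le_star_self_of_le hcomm hunit hadj (le_res_self_of_le hunit hadj hxt))

theorem setOf_idempotent_subset_union_image [LinearOrder X]
    (hcomm : ∀ x y, star x y = star y x)
    (hassoc : ∀ x y z, star (star x y) z = star x (star y z)) (hunit : ∀ x, star x t = x)
    (hadj : ∀ x z v, star x v ≤ z ↔ v ≤ res x z) (hinv : ∀ x, res (res x t) t = x) :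
    {x : X | star x x = x} ⊆
      {x | star x x = x ∧ t ≤ x} ∪ (fun y ↦ res y t) '' {x | star x x = x ∧ t ≤ x} := by
  intro x hx
  rcases le_total t x with hpos | hneg
  · exact Or.inl ⟨hx, hpos⟩
  · exact Or.inr ⟨res x t, ⟨star_res_self_eq_of_idempotent_of_le hcomm hassoc hunit hadj hx hneg,
      le_res_self_of_le hunit hadj hneg⟩, hinv x⟩

end ResiduatedChain

/-- In any odd involutive residuated chain `(X, ≤, ∗, t)`, the set of all
idempotent elements is finite iff the set of positive idempotent elements is finite. -/
theorem stmt_5 {X : Type*} [LinearOrder X]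
    (star : X → X → X) (res : X → X → X) (t : X)
    (hcomm : ∀ x y, star x y = star y x)
    (hassoc : ∀ x y z, star (star x y) z = star x (star y z))
    (hunit : ∀ x, star x t = x)
    (hadj : ∀ x z v, star x v ≤ z ↔ v ≤ res x z)
    (hinv : ∀ x, res (res x t) t = x) :
    {x : X | star x x = x}.Finite ↔ {x : X | star x x = x ∧ t ≤ x}.Finite :=
  ⟨fun h ↦ h.subset fun _ hx ↦ hx.1, fun hpos ↦
    (hpos.union (hpos.image _)).subset
      (setOf_idempotent_subset_union_image hcomm hassoc hunit hadj hinv)⟩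
end

section
/- Let U be a group-like uninorm on the real unit interval [0,1] with unit t ∈ (0,1). Then U(x,y) = 0 whenever min(x,y) = 0; U(x,y) = 1 whenever x > 0, y > 0 and max(x,y) = 1; and 0 < U(x,y) < 1 whenever 0 < x < 1 and 0 < y < 1. -/
/-- A group-like uninorm on the real unit interval `[0,1]` with unit `t ∈ (0,1)`:
commutative, associative, nondecreasing in each argument, unit `t`, residuated
(`Res x z` is the greatest `v` with `U x v ≤ z`), and the residual complement
`¬x := Res x t` is an involution with `¬t = t`. -/
def IsGroupLikeUninorm (U : unitInterval → unitInterval → unitInterval) (t : unitInterval) : Prop :=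
  (∀ x y, U x y = U y x) ∧
  (∀ x y z, U (U x y) z = U x (U y z)) ∧
  (∀ x, Monotone fun y => U x y) ∧
  (∀ y, Monotone fun x => U x y) ∧
  (0 : ℝ) < (t : ℝ) ∧ (t : ℝ) < 1 ∧
  (∀ x, U x t = x) ∧
  ∃ Res : unitInterval → unitInterval → unitInterval,
    (∀ x z v, U x v ≤ z ↔ v ≤ Res x z) ∧
    (∀ x, Res (Res x t) t = x) ∧
    Res t t = t

/-!
Write `¬x` for the residual `R x t`. The key step is that the top element absorbs every
`a > ⊥`. Put `c = U a ⊤`, so that `U c ⊤ = c`; by residuation and involutivity `U c ¬c ≤ ¬⊤ = ⊥`.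
Since the order is linear and `¬` is an antitone involution fixing `t`, one of `c`, `¬c` lies
above the unit, hence the other one lies below `U c ¬c = ⊥`. But `c ≥ a > ⊥`, and `¬c = ⊥` would
force `c = ⊤`. Absorption then excludes zero divisors (`U x y = ⊥` gives `U x ⊤ ≤ ¬y`) and proper
elements with product `⊤` (`U ¬x (U x y) ≤ y`).
-/

namespace Uninorm

variable {α : Type*} {U R : α → α → α} {t : α}

theorem mul_bot_of_residuated [PartialOrder α] [OrderBot α]
    (hres : ∀ x z v, U x v ≤ z ↔ v ≤ R x z) (x : α) : U x ⊥ = ⊥ :=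
  le_bot_iff.mp ((hres x ⊥ ⊥).mpr bot_le)

theorem residual_bot_left [PartialOrder α] [BoundedOrder α] (hcomm : ∀ x y, U x y = U y x)
    (hres : ∀ x z v, U x v ≤ z ↔ v ≤ R x z) (z : α) : R ⊥ z = ⊤ := by
  refine top_le_iff.mp ((hres ⊥ z ⊤).mp ?_)
  rw [hcomm, mul_bot_of_residuated hres]
  exact bot_le

theorem residual_top_left [PartialOrder α] [BoundedOrder α] (hcomm : ∀ x y, U x y = U y x)
    (hres : ∀ x z v, U x v ≤ z ↔ v ≤ R x z) (hinv : ∀ x, R (R x t) t = x) : R ⊤ t = ⊥ := by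
  simpa only [residual_bot_left hcomm hres] using hinv ⊥

theorem residual_antitone_left [Preorder α] (hcomm : ∀ x y, U x y = U y x)
    (hmono : ∀ x, Monotone (U x)) (hres : ∀ x z v, U x v ≤ z ↔ v ≤ R x z) (z : α) :
    Antitone (R · z) := by
  intro a b hab
  rw [← hres]
  calc U a (R b z) = U (R b z) a := hcomm _ _
    _ ≤ U (R b z) b := hmono _ hab
    _ = U b (R b z) := hcomm _ _
    _ ≤ z := (hres b z _).mpr le_rfl

theorem mul_le_residual_comm [LE α] (hcomm : ∀ x y, U x y = U y x)
    (hassoc : ∀ x y z, U (U x y) z = U x (U y z)) (hres : ∀ x z v, U x v ≤ z ↔ v ≤ R x z)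
    (a v w z : α) : U a v ≤ R w z ↔ U a w ≤ R v z := by
  rw [← hres, ← hres, hcomm w, hcomm v, hassoc, hassoc, hcomm v w]

theorem le_mul_of_unit_le [Preorder α] (hmono : ∀ x, Monotone (U x)) (hunit : ∀ x, U x t = x)
    {x : α} (hx : t ≤ x) (y : α) : y ≤ U y x :=
  (hunit y).ge.trans (hmono y hx)

theorem unit_le_or_unit_le_residual [LinearOrder α] (hcomm : ∀ x y, U x y = U y x)
    (hmono : ∀ x, Monotone (U x)) (hres : ∀ x z v, U x v ≤ z ↔ v ≤ R x z)
    (hneg_unit : R t t = t) (c : α) : t ≤ c ∨ t ≤ R c t := by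
  refine (le_total t c).imp_right fun hct => ?_
  simpa only [hneg_unit] using residual_antitone_left hcomm hmono hres t hct

theorem mul_top_of_bot_lt [LinearOrder α] [BoundedOrder α] (hcomm : ∀ x y, U x y = U y x)
    (hassoc : ∀ x y z, U (U x y) z = U x (U y z)) (hmono : ∀ x, Monotone (U x))
    (hunit : ∀ x, U x t = x) (hres : ∀ x z v, U x v ≤ z ↔ v ≤ R x z)
    (hinv : ∀ x, R (R x t) t = x) (hneg_unit : R t t = t) {a : α} (ha : ⊥ < a) :
    U a ⊤ = ⊤ := by
  set c := U a ⊤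
  have htop_idem : U ⊤ ⊤ = (⊤ : α) := top_le_iff.mp (le_mul_of_unit_le hmono hunit le_top ⊤)
  have hc_idem : U c ⊤ = c := by rw [hassoc, htop_idem]
  have hc_pos : ⊥ < c := ha.trans_le (le_mul_of_unit_le hmono hunit le_top a)
  have hc_negc : U c (R c t) = ⊥ := by
    rw [← le_bot_iff, ← residual_top_left hcomm hres hinv,
      mul_le_residual_comm hcomm hassoc hres, hc_idem, hinv]
  rcases unit_le_or_unit_le_residual hcomm hmono hres hneg_unit c with htc | ht_negc
  · have hnegc_bot : R c t = ⊥ := le_bot_iff.mp <| calc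
      R c t ≤ U (R c t) c := le_mul_of_unit_le hmono hunit htc _
      _ = ⊥ := by rw [hcomm, hc_negc]
    rw [← hinv c, hnegc_bot, residual_bot_left hcomm hres]
  · have hc_bot : c ≤ ⊥ := calc
      c ≤ U c (R c t) := le_mul_of_unit_le hmono hunit ht_negc c
      _ = ⊥ := hc_negc
    exact absurd hc_bot hc_pos.not_ge

theorem bot_lt_mul [PartialOrder α] [BoundedOrder α] (hcomm : ∀ x y, U x y = U y x)
    (hassoc : ∀ x y z, U (U x y) z = U x (U y z)) (hres : ∀ x z v, U x v ≤ z ↔ v ≤ R x z)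
    (hinv : ∀ x, R (R x t) t = x) (htop : ∀ a, ⊥ < a → U a ⊤ = ⊤) {x y : α} (hx : ⊥ < x)
    (hy : ⊥ < y) : ⊥ < U x y := by
  refine bot_lt_iff_ne_bot.mpr fun hxy => hy.ne' ?_
  have hneg_y : R y t = ⊤ := by
    refine top_le_iff.mp ?_
    rw [← htop x hx, ← mul_le_residual_comm hcomm hassoc hres, hxy]
    exact bot_le
  rw [← hinv y, hneg_y, residual_top_left hcomm hres hinv]

theorem mul_lt_top [PartialOrder α] [BoundedOrder α] (hcomm : ∀ x y, U x y = U y x)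
    (hassoc : ∀ x y z, U (U x y) z = U x (U y z)) (hmono : ∀ x, Monotone (U x))
    (hunit : ∀ x, U x t = x) (hres : ∀ x z v, U x v ≤ z ↔ v ≤ R x z)
    (hinv : ∀ x, R (R x t) t = x) (htop : ∀ a, ⊥ < a → U a ⊤ = ⊤) {x y : α} (hx : x < ⊤)
    (hy : y < ⊤) : U x y < ⊤ := by
  refine lt_top_iff_ne_top.mpr fun hxy => hy.ne (top_le_iff.mp ?_)
  have hnegx_pos : ⊥ < R x t := by
    refine bot_lt_iff_ne_bot.mpr fun h => hx.ne ?_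
    rw [← hinv x, h, residual_bot_left hcomm hres]
  have hnegx_x : U (R x t) x ≤ t := by
    rw [hcomm]
    exact (hres x t _).mpr le_rfl
  calc ⊤ = U (R x t) (U x y) := by rw [hxy, htop _ hnegx_pos]
    _ = U y (U (R x t) x) := by rw [← hassoc, hcomm]
    _ ≤ U y t := hmono y hnegx_x
    _ = y := hunit y

end Uninorm

/-- boundary behaviour of a group-like uninorm: `U(x,y) = 0` whenever
`min(x,y) = 0`; `U(x,y) = 1` whenever `x,y > 0` and `max(x,y) = 1`; and
`0 < U(x,y) < 1` whenever `0 < x < 1` and `0 < y < 1`. -/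
theorem stmt_6 (U : unitInterval → unitInterval → unitInterval) (t : unitInterval)
    (h : IsGroupLikeUninorm U t) :
    (∀ x y : unitInterval, min (x : ℝ) (y : ℝ) = 0 → U x y = 0) ∧
    (∀ x y : unitInterval, 0 < (x : ℝ) → 0 < (y : ℝ) → max (x : ℝ) (y : ℝ) = 1 → U x y = 1) ∧
    (∀ x y : unitInterval, 0 < (x : ℝ) → (x : ℝ) < 1 → 0 < (y : ℝ) → (y : ℝ) < 1 →
      0 < (U x y : ℝ) ∧ (U x y : ℝ) < 1) := by
  obtain ⟨hcomm, hassoc, hmono, -, -, -, hunit, R, hres, hinv, hneg_unit⟩ := h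
  have htop : ∀ a, ⊥ < a → U a ⊤ = ⊤ := fun _ =>
    Uninorm.mul_top_of_bot_lt hcomm hassoc hmono hunit hres hinv hneg_unit
  refine ⟨fun x y hmin => ?_, fun x y hx hy hmax => ?_, fun x y hx0 hx1 hy0 hy1 => ⟨?_, ?_⟩⟩
  · rcases min_eq_iff.mp hmin with ⟨hx, -⟩ | ⟨hy, -⟩
    · rw [hcomm, show x = ⊥ from Subtype.ext hx]
      exact Uninorm.mul_bot_of_residuated hres y
    · rw [show y = ⊥ from Subtype.ext hy]
      exact Uninorm.mul_bot_of_residuated hres x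
  · rcases max_eq_iff.mp hmax with ⟨hx1, -⟩ | ⟨hy1, -⟩
    · rw [hcomm, show x = ⊤ from Subtype.ext hx1]
      exact htop y hy
    · rw [show y = ⊤ from Subtype.ext hy1]
      exact htop x hx
  · exact Uninorm.bot_lt_mul hcomm hassoc hres hinv htop hx0 hy0
  · exact Uninorm.mul_lt_top hcomm hassoc hmono hunit hres hinv htop hx1 hy1
end

section
/- If U₁ and U₂ are group-like uninorms on the real unit interval [0,1] such that U₁(x,y) = U₂(x,y) for all x, y in the open interval (0,1), then U₁ = U₂ on all of [0,1]² (in particular their unit elements coincide). -/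
/-! Residuation makes `U x` the lower adjoint of a Galois connection on `[0,1]`, so `U x 0 = 0`
and `U x` is left-continuous: `U x 1 = sup_{v < 1} U x v`. Hence the values of a group-like
uninorm on the boundary of the square are determined by its values inside, first along the
edges `(0,1) × {0,1}` and then, by commutativity, everywhere. -/

theorem GaloisConnection.l_le_of_forall_lt {α β : Type*} [LinearOrder α] [DenselyOrdered α]
    [Preorder β] {l : α → β} {u : β → α} (gc : GaloisConnection l u) {a : α} {b : β}
    (h : ∀ c < a, l c ≤ b) : l a ≤ b :=
  gc.le_iff_le.mpr <| le_of_forall_lt_imp_le_of_dense fun c hc => gc.le_iff_le.mp (h c hc)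

theorem GaloisConnection.le_of_le_on_Ioo {α β : Type*} [LinearOrder α] [DenselyOrdered α]
    [BoundedOrder α] [PartialOrder β] [OrderBot β] {l g : α → β} {u : β → α}
    (gc : GaloisConnection l u) (hg : Monotone g) (h : ∀ a, ⊥ < a → a < ⊤ → l a ≤ g a)
    (a : α) : l a ≤ g a := by
  have below_top : ∀ c < ⊤, l c ≤ g c := by
    intro c hc
    rcases eq_bot_or_bot_lt c with rfl | hc0
    · simp [gc.l_bot]
    · exact h c hc0 hc
  rcases eq_top_or_lt_top a with rfl | ha
  · exact gc.l_le_of_forall_lt fun c hc => (below_top c hc).trans (hg le_top)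
  · exact below_top a ha

namespace IsGroupLikeUninorm

variable {U U' : unitInterval → unitInterval → unitInterval} {t t' : unitInterval}

theorem comm (h : IsGroupLikeUninorm U t) (x y : unitInterval) : U x y = U y x :=
  h.1 x y

theorem monotone_right (h : IsGroupLikeUninorm U t) (x : unitInterval) : Monotone (U x) :=
  h.2.2.1 x

theorem mul_unit (h : IsGroupLikeUninorm U t) (x : unitInterval) : U x t = x :=
  h.2.2.2.2.2.2.1 x

theorem exists_galoisConnection (h : IsGroupLikeUninorm U t) :
    ∃ R : unitInterval → unitInterval → unitInterval, ∀ x, GaloisConnection (U x) (R x) := by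
  obtain ⟨R, hR, -⟩ := h.2.2.2.2.2.2.2
  exact ⟨R, fun x v z => hR x z v⟩

theorem le_of_le_on_Ioo (h : IsGroupLikeUninorm U t) (h' : IsGroupLikeUninorm U' t')
    (hle : ∀ x y : unitInterval, 0 < x → x < 1 → 0 < y → y < 1 → U x y ≤ U' x y)
    (x y : unitInterval) : U x y ≤ U' x y := by
  obtain ⟨R, gc⟩ := h.exists_galoisConnection
  have extend_row : ∀ x, (∀ y, 0 < y → y < 1 → U x y ≤ U' x y) → ∀ y, U x y ≤ U' x y :=
    fun x hx => (gc x).le_of_le_on_Ioo (h'.monotone_right x) hx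
  rw [h.comm, h'.comm]
  refine extend_row y (fun x hx0 hx1 => ?_) x
  rw [h.comm, h'.comm]
  exact extend_row x (fun y hy0 hy1 => hle x y hx0 hx1 hy0 hy1) y

end IsGroupLikeUninorm

/-- two group-like uninorms agreeing on the open unit square agree
everywhere; in particular their unit elements coincide. -/
theorem stmt_7 (U₁ U₂ : unitInterval → unitInterval → unitInterval) (t₁ t₂ : unitInterval)
    (h₁ : IsGroupLikeUninorm U₁ t₁) (h₂ : IsGroupLikeUninorm U₂ t₂)
    (hagree : ∀ x y : unitInterval, 0 < (x : ℝ) → (x : ℝ) < 1 → 0 < (y : ℝ) → (y : ℝ) < 1 →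
      U₁ x y = U₂ x y) :
    U₁ = U₂ ∧ t₁ = t₂ := by
  have hU : U₁ = U₂ := funext₂ fun x y => le_antisymm
    (h₁.le_of_le_on_Ioo h₂ (fun x y hx0 hx1 hy0 hy1 => (hagree x y hx0 hx1 hy0 hy1).le) x y)
    (h₂.le_of_le_on_Ioo h₁ (fun x y hx0 hx1 hy0 hy1 => (hagree x y hx0 hx1 hy0 hy1).ge) x y)
  refine ⟨hU, ?_⟩
  calc t₁ = U₂ t₁ t₂ := (h₂.mul_unit t₁).symm
    _ = U₂ t₂ t₁ := h₂.comm t₁ t₂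
    _ = U₁ t₂ t₁ := by rw [hU]
    _ = t₂ := h₁.mul_unit t₂
end

section
/- Let φ : (0,1) → ℝ be an order isomorphism from the open real unit interval onto the real line. Define U : [0,1]² → [0,1] by U(x,y) = φ⁻¹(φ(x) + φ(y)) if x, y ∈ (0,1); U(x,y) = 0 if min(x,y) = 0; and U(x,y) = 1 if x ≠ 0, y ≠ 0 and max(x,y) = 1. Then U is a group-like uninorm with unit element t = φ⁻¹(0). -/
open Set

namespace EReal

/-- The greatest `b` with `a + b ≤ c`. Plain `c - a` fails when `a = ⊥` or `c = ⊤`, because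
in `EReal` one has `⊥ + ⊤ = ⊥`. -/
noncomputable def addResidual (a c : EReal) : EReal := if a = ⊥ ∨ c = ⊤ then ⊤ else c - a

theorem add_le_iff_le_addResidual {a b c : EReal} : a + b ≤ c ↔ b ≤ addResidual a c := by
  unfold addResidual
  split_ifs with h
  · rcases h with rfl | rfl <;> simp
  · push Not at h
    rw [le_sub_iff_add_le (.inl h.1) (.inr h.2), add_comm]

theorem addResidual_zero_right (a : EReal) : addResidual a 0 = -a := by
  unfold addResidual
  split_ifs with h
  · rcases h with rfl | h
    · rfl
    · exact absurd h zero_ne_top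
  · exact zero_sub a

end EReal

theorem isGroupLikeUninorm_of_orderIso (Φ : unitInterval ≃o EReal) :
    IsGroupLikeUninorm (fun x y => Φ.symm (Φ x + Φ y)) (Φ.symm 0) := by
  have hbot : Φ.symm ⊥ = 0 := Φ.symm.map_bot
  have htop : Φ.symm ⊤ = 1 := Φ.symm.map_top
  refine ⟨fun x y => congrArg Φ.symm (add_comm _ _),
    fun x y z => by simp only [Φ.apply_symm_apply, add_assoc],
    fun x a b hab => Φ.symm.monotone (add_le_add_right (Φ.monotone hab) _),
    fun y a b hab => Φ.symm.monotone (add_le_add_left (Φ.monotone hab) _),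
    ?_, ?_, fun x => by simp only [Φ.apply_symm_apply, add_zero, Φ.symm_apply_apply],
    fun x z => Φ.symm (EReal.addResidual (Φ x) (Φ z)), fun x z v => ?_, fun x => ?_, ?_⟩
  · exact unitInterval.coe_pos.mpr (hbot ▸ Φ.symm.strictMono EReal.bot_lt_zero)
  · exact unitInterval.coe_lt_one.mpr (htop ▸ Φ.symm.strictMono EReal.zero_lt_top)
  · rw [Φ.symm_apply_le, EReal.add_le_iff_le_addResidual, Φ.le_symm_apply]
  · simp only [Φ.apply_symm_apply, EReal.addResidual_zero_right, neg_neg, Φ.symm_apply_apply]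
  · simp only [Φ.apply_symm_apply, EReal.addResidual_zero_right, neg_zero]

theorem unitInterval.coe_mem_Ioo_iff {x : unitInterval} :
    (x : ℝ) ∈ Ioo 0 1 ↔ x ≠ 0 ∧ x ≠ 1 := by
  rw [mem_Ioo, unitInterval.coe_pos, unitInterval.coe_lt_one, unitInterval.pos_iff_ne_zero,
    unitInterval.lt_one_iff_ne_one]

section Extend

variable (φ : Ioo (0 : ℝ) 1 ≃o ℝ)

def extendOrderIsoSymmFun : EReal → unitInterval :=
  EReal.rec 0 (fun r => ⟨φ.symm r, Ioo_subset_Icc_self (φ.symm r).2⟩) 1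

theorem strictMono_extendOrderIsoSymmFun : StrictMono (extendOrderIsoSymmFun φ) := by
  intro a b hab
  induction a <;> induction b
  case bot.coe r => exact (φ.symm r).2.1
  case bot.top => exact zero_lt_one' ℝ
  case coe.coe r s => exact φ.symm.strictMono (EReal.coe_lt_coe_iff.mp hab)
  case coe.top r => exact (φ.symm r).2.2
  all_goals simp at hab

theorem surjective_extendOrderIsoSymmFun : Function.Surjective (extendOrderIsoSymmFun φ) := by
  intro x
  by_cases hx0 : x = 0
  · exact ⟨⊥, hx0.symm⟩
  by_cases hx1 : x = 1
  · exact ⟨⊤, hx1.symm⟩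
  have hx := unitInterval.coe_mem_Ioo_iff.mpr ⟨hx0, hx1⟩
  exact ⟨φ ⟨x, hx⟩, Subtype.ext (by simp [extendOrderIsoSymmFun])⟩

noncomputable def extendOrderIso : unitInterval ≃o EReal :=
  ((strictMono_extendOrderIsoSymmFun φ).orderIsoOfSurjective _
    (surjective_extendOrderIsoSymmFun φ)).symm

theorem coe_extendOrderIso_symm_coe (r : ℝ) :
    ((extendOrderIso φ).symm r : ℝ) = φ.symm r := rfl

theorem extendOrderIso_of_mem_Ioo {x : unitInterval} (hx : (x : ℝ) ∈ Ioo 0 1) :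
    extendOrderIso φ x = φ ⟨x, hx⟩ := by
  apply (extendOrderIso φ).symm.injective
  rw [OrderIso.symm_apply_apply]
  refine Subtype.ext ?_
  rw [coe_extendOrderIso_symm_coe, φ.symm_apply_apply]

end Extend

theorem eq_extendOrderIso_symm_add (φ : Ioo (0 : ℝ) 1 ≃o ℝ)
    (U : unitInterval → unitInterval → unitInterval)
    (h0 : ∀ x y : unitInterval, min (x : ℝ) (y : ℝ) = 0 → U x y = 0)
    (h1 : ∀ x y : unitInterval, (x : ℝ) ≠ 0 → (y : ℝ) ≠ 0 → max (x : ℝ) (y : ℝ) = 1 →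
      U x y = 1)
    (hmid : ∀ (x y : unitInterval) (hx : (x : ℝ) ∈ Ioo (0 : ℝ) 1) (hy : (y : ℝ) ∈ Ioo (0 : ℝ) 1),
      (U x y : ℝ) = (φ.symm (φ ⟨(x : ℝ), hx⟩ + φ ⟨(y : ℝ), hy⟩) : ℝ))
    (x y : unitInterval) :
    U x y = (extendOrderIso φ).symm (extendOrderIso φ x + extendOrderIso φ y) := by
  set Φ := extendOrderIso φ
  have hΦ_eq_bot {z : unitInterval} : Φ z = ⊥ ↔ z = 0 := map_eq_bot_iff Φ
  have hΦ_one : Φ 1 = ⊤ := (map_eq_top_iff Φ).mpr rfl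
  by_cases hzero : x = 0 ∨ y = 0
  · rw [h0 x y (by rcases hzero with rfl | rfl <;> simp [unitInterval.nonneg]),
      EReal.add_eq_bot_iff.mpr (by simpa only [hΦ_eq_bot] using hzero), Φ.symm.map_bot]
    rfl
  push Not at hzero
  by_cases hone : x = 1 ∨ y = 1
  · rw [h1 x y (unitInterval.coe_ne_zero.mpr hzero.1) (unitInterval.coe_ne_zero.mpr hzero.2)
      (by rcases hone with rfl | rfl <;> simp [unitInterval.le_one])]
    have hsum : Φ x + Φ y = ⊤ := by
      rcases hone with rfl | rfl
      · rw [hΦ_one, EReal.top_add_of_ne_bot (hΦ_eq_bot.not.mpr hzero.2)]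
      · rw [hΦ_one, EReal.add_top_of_ne_bot (hΦ_eq_bot.not.mpr hzero.1)]
    rw [hsum, Φ.symm.map_top]
    rfl
  push Not at hone
  have hx := unitInterval.coe_mem_Ioo_iff.mpr ⟨hzero.1, hone.1⟩
  have hy := unitInterval.coe_mem_Ioo_iff.mpr ⟨hzero.2, hone.2⟩
  rw [extendOrderIso_of_mem_Ioo φ hx, extendOrderIso_of_mem_Ioo φ hy, ← EReal.coe_add]
  exact Subtype.ext (hmid x y hx hy)

/-- if `φ : (0,1) → ℝ` is an order isomorphism and `U` is defined by
`U(x,y) = φ⁻¹(φ(x)+φ(y))` on `(0,1)²`, `U(x,y) = 0` if `min(x,y) = 0`, and `U(x,y) = 1`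
if `x ≠ 0 ≠ y` and `max(x,y) = 1`, then `U` is a group-like uninorm with unit `φ⁻¹(0)`. -/
theorem stmt_8 (φ : Set.Ioo (0 : ℝ) 1 ≃o ℝ)
    (U : unitInterval → unitInterval → unitInterval)
    (h0 : ∀ x y : unitInterval, min (x : ℝ) (y : ℝ) = 0 → U x y = 0)
    (h1 : ∀ x y : unitInterval, (x : ℝ) ≠ 0 → (y : ℝ) ≠ 0 → max (x : ℝ) (y : ℝ) = 1 →
      U x y = 1)
    (hmid : ∀ (x y : unitInterval) (hx : (x : ℝ) ∈ Set.Ioo (0 : ℝ) 1)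
      (hy : (y : ℝ) ∈ Set.Ioo (0 : ℝ) 1),
      (U x y : ℝ) = (φ.symm (φ ⟨(x : ℝ), hx⟩ + φ ⟨(y : ℝ), hy⟩) : ℝ)) :
    ∃ t : unitInterval, (t : ℝ) = (φ.symm 0 : ℝ) ∧ IsGroupLikeUninorm U t := by
  refine ⟨(extendOrderIso φ).symm 0, coe_extendOrderIso_symm_coe φ 0, ?_⟩
  obtain rfl : U = fun x y => (extendOrderIso φ).symm (extendOrderIso φ x + extendOrderIso φ y) :=
    funext₂ (eq_extendOrderIso_symm_add φ U h0 h1 hmid)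
  exact isGroupLikeUninorm_of_orderIso (extendOrderIso φ)
end

section
/- Let A and L be linear orders, let H be a nonempty subset of A, and let G be a subset of L. Let C = {(a, y) ∈ A ×ₗ WithBot (WithTop L) : a ∈ H or y = ⊥} with the induced order, and let C' = {(a, y) ∈ C : a ∈ H and y is an element of L belonging to G}. Then C' is discretely embedded into C if and only if G is discretely embedded into L. -/
/-!
Fix `a ∈ H`. In `C`, the points `(a, ⊥)` and `(a, ⊤)` lie outside `C'`, and the open interval
between them is exactly the copy `{a} × L` of `L`. Hence a predecessor in `C` of a point
`(a, l)` that lies in `C'` is strictly above `(a, ⊥)`, so it is `(a, m)` with `m` the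
predecessor of `l` in `L`, `m ∈ G`; conversely such an `m` gives the predecessor `(a, m)`,
because every point of `C` below `(a, l)` outside the fibre is below `(a, ⊥)`. Successors are
the same statement in the order dual.
-/

/-- `Z` is discretely embedded into `X`: every `x ∈ Z` has a predecessor and a successor
in `X`, and both belong to `Z`. -/
def DiscretelyEmbedded {X : Type*} [LinearOrder X] (Z : Set X) : Prop :=
  ∀ x ∈ Z, (∃ p, p < x ∧ (∀ y, y < x → y ≤ p) ∧ p ∈ Z) ∧
           (∃ s, x < s ∧ (∀ y, x < y → s ≤ y) ∧ s ∈ Z)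

open Set OrderDual

section Predecessor

variable {X L : Type*} [LinearOrder X] [LinearOrder L]

def HasPredIn (Z : Set X) (x : X) : Prop :=
  ∃ p, p < x ∧ (∀ y, y < x → y ≤ p) ∧ p ∈ Z

theorem discretelyEmbedded_iff {Z : Set X} :
    DiscretelyEmbedded Z ↔ ∀ x ∈ Z, HasPredIn Z x ∧ HasPredIn (ofDual ⁻¹' Z) (toDual x) :=
  Iff.rfl

theorem OrderEmbedding.hasPredIn_apply_iff (f : L ↪o X) {u v : X} (hf : range f = Ioo u v)
    {Z : Set X} (hu : u ∉ Z) {G : Set L} (hG : f ⁻¹' Z = G) (l : L) :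
    HasPredIn Z (f l) ↔ HasPredIn G l := by
  have hbound : ∀ m, u < f m := fun m => (hf.subset (mem_range_self m)).1
  constructor
  · rintro ⟨p, hpl, hmax, hpZ⟩
    have hup : u < p := (hmax u (hbound l)).lt_of_ne (fun h => hu (h ▸ hpZ))
    obtain ⟨m, rfl⟩ : p ∈ range f := hf ▸ ⟨hup, hpl.trans (hf.subset (mem_range_self l)).2⟩
    refine ⟨m, f.lt_iff_lt.1 hpl, fun k hk => f.le_iff_le.1 (hmax _ (f.lt_iff_lt.2 hk)), ?_⟩
    exact hG ▸ hpZ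
  · rintro ⟨m, hml, hmax, hmG⟩
    refine ⟨f m, f.lt_iff_lt.2 hml, fun y hy => ?_, (hG ▸ hmG : m ∈ f ⁻¹' Z)⟩
    by_cases hyu : u < y
    · obtain ⟨k, rfl⟩ : y ∈ range f := hf ▸ ⟨hyu, hy.trans (hf.subset (mem_range_self l)).2⟩
      exact f.le_iff_le.2 (hmax k (f.lt_iff_lt.1 hy))
    · exact (not_lt.1 hyu).trans (hbound m).le

theorem OrderEmbedding.hasPredIn_toDual_apply_iff (f : L ↪o X) {u v : X}
    (hf : range f = Ioo u v) {Z : Set X} (hv : v ∉ Z) {G : Set L} (hG : f ⁻¹' Z = G) (l : L) :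
    HasPredIn (ofDual ⁻¹' Z) (toDual (f l)) ↔ HasPredIn (ofDual ⁻¹' G) (toDual l) :=
  f.dual.hasPredIn_apply_iff (u := toDual v) (v := toDual u) (by rw [Ioo_toDual, ← hf]; rfl)
    hv (by rw [← hG]; rfl) (toDual l)

theorem discretelyEmbedded_iff_of_orderEmbedding {ι : Type*} [Nonempty ι] {Z : Set X}
    {G : Set L} (f : ι → L ↪o X) (u v : ι → X) (hf : ∀ i, range (f i) = Ioo (u i) (v i))
    (hu : ∀ i, u i ∉ Z) (hv : ∀ i, v i ∉ Z) (hG : ∀ i, f i ⁻¹' Z = G)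
    (hZ : Z ⊆ ⋃ i, range (f i)) :
    DiscretelyEmbedded Z ↔ DiscretelyEmbedded G := by
  have key : ∀ i l, (HasPredIn Z (f i l) ∧ HasPredIn (ofDual ⁻¹' Z) (toDual (f i l))) ↔
      (HasPredIn G l ∧ HasPredIn (ofDual ⁻¹' G) (toDual l)) := fun i l =>
    and_congr ((f i).hasPredIn_apply_iff (hf i) (hu i) (hG i) l)
      ((f i).hasPredIn_toDual_apply_iff (hf i) (hv i) (hG i) l)
  simp only [discretelyEmbedded_iff]
  constructor
  · intro h l hl
    obtain ⟨i⟩ := ‹Nonempty ι›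
    exact (key i l).1 (h _ ((hG i).symm ▸ hl : l ∈ f i ⁻¹' Z))
  · intro h x hx
    obtain ⟨i, l, rfl⟩ := mem_iUnion.1 (hZ hx)
    exact (key i l).2 (h l (hG i ▸ hx))

end Predecessor

theorem Prod.Lex.Ioo_toLex_eq_image {α β : Type*} [LinearOrder α] [LinearOrder β] (a : α)
    (b₁ b₂ : β) :
    Ioo (toLex (a, b₁)) (toLex (a, b₂)) = (fun b => toLex (a, b)) '' Ioo b₁ b₂ := by
  ext x
  obtain ⟨⟨c, b⟩, rfl⟩ := toLex.surjective x
  simp only [mem_Ioo, Prod.Lex.toLex_lt_toLex, mem_image, toLex_inj, Prod.ext_iff]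
  grind

theorem WithBot.range_coe_coe {L : Type*} [LinearOrder L] :
    range (fun l : L => ((l : WithTop L) : WithBot (WithTop L))) =
      Ioo ⊥ ((⊤ : WithTop L) : WithBot (WithTop L)) := by
  rw [range_comp' WithBot.some WithTop.some, WithTop.range_coe, WithBot.image_coe_Iio]

section Fiber

variable {A L : Type*} [LinearOrder A] [LinearOrder L] {H : Set A}

def fiberEmbedding {a : A} (ha : a ∈ H) :
    L ↪o {p : A ×ₗ WithBot (WithTop L) // (ofLex p).1 ∈ H ∨ (ofLex p).2 = ⊥} :=
  OrderEmbedding.ofStrictMono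
    (fun l => ⟨toLex (a, ((l : WithTop L) : WithBot (WithTop L))), .inl ha⟩)
    fun _ _ h => Prod.Lex.toLex_lt_toLex.2 (.inr ⟨rfl, by simpa using h⟩)

@[simp]
theorem coe_fiberEmbedding {a : A} (ha : a ∈ H) (l : L) :
    (fiberEmbedding ha l).val = toLex (a, ((l : WithTop L) : WithBot (WithTop L))) :=
  rfl

theorem range_fiberEmbedding {a : A} (ha : a ∈ H) :
    range (fiberEmbedding (L := L) ha) =
      Ioo ⟨toLex (a, ⊥), .inr rfl⟩ ⟨toLex (a, ↑(⊤ : WithTop L)), .inl ha⟩ := by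
  rw [← preimage_subtype_val_Ioo, Prod.Lex.Ioo_toLex_eq_image, ← WithBot.range_coe_coe,
    ← range_comp]
  ext x
  constructor
  · rintro ⟨l, rfl⟩; exact ⟨l, rfl⟩
  · rintro ⟨l, hl⟩; exact ⟨l, Subtype.ext hl⟩

end Fiber

/-- with `C = {(a,y) ∈ A ×ₗ WithBot (WithTop L) : a ∈ H ∨ y = ⊥}` and
`C' = {(a,y) ∈ C : a ∈ H ∧ y ∈ L ∧ y ∈ G}`, the set `C'` is discretely embedded into `C`
iff `G` is discretely embedded into `L`. -/
theorem stmt_10 {A L : Type*} [LinearOrder A] [LinearOrder L]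
    (H : Set A) (hH : H.Nonempty) (G : Set L) :
    DiscretelyEmbedded
      {c : {p : A ×ₗ WithBot (WithTop L) // (ofLex p).1 ∈ H ∨ (ofLex p).2 = ⊥} |
        (ofLex c.val).1 ∈ H ∧
          ∃ l ∈ G, (ofLex c.val).2 = ((l : WithTop L) : WithBot (WithTop L))} ↔
      DiscretelyEmbedded G := by
  have : Nonempty H := hH.to_subtype
  refine discretelyEmbedded_iff_of_orderEmbedding (fun a : H => fiberEmbedding a.2)
    (fun a => ⟨toLex (a, ⊥), .inr rfl⟩) (fun a => ⟨toLex (a, ↑(⊤ : WithTop L)), .inl a.2⟩)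
    (fun a => range_fiberEmbedding a.2) ?_ ?_ ?_ ?_
  · rintro a ⟨-, l, -, h⟩
    exact WithBot.bot_ne_coe h
  · rintro a ⟨-, l, -, h⟩
    exact WithTop.top_ne_coe (WithBot.coe_injective h)
  · intro a
    ext l
    simp [a.2]
  · rintro ⟨x, hx⟩ ⟨ha, l, -, hxl⟩
    exact mem_iUnion.2 ⟨⟨_, ha⟩, l, Subtype.ext (Prod.ext rfl hxl.symm)⟩
end

section
/- Let A, L, B be linear orders with B nonempty, let H be a nonempty subset of A and G a nonempty subset of L. Let C = {(a, y) ∈ A ×ₗ WithBot (WithTop L) : a ∈ H or y = ⊥} with the induced order, let C' = {(a, y) ∈ C : a ∈ H and y is an element of L belonging to G}, and let D = {(c, z) ∈ C ×ₗ WithTop B : c ∈ C' or z = ⊤} with the induced order. Then the following are equivalent: (1) C' is discretely embedded into C and D is order-isomorphic to ℝ; (2) A is order-isomorphic to ℝ, B is order-isomorphic to ℝ, H and G are countable, L is Dedekind complete, L has a countable dense subset, L has neither a least nor a greatest element, G is discretely embedded into L, and there exist no two elements x < y of L ∖ G with no element of L strictly between them. -/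
/-- The universe `C = {(a,y) ∈ A ×ₗ WithBot (WithTop L) : a ∈ H ∨ y = ⊥}` of the type I
partial lexicographic product, with the induced order. -/
abbrev PLP1 (A L : Type*) [LinearOrder A] [LinearOrder L] (H : Set A) : Type _ :=
  {p : A ×ₗ WithBot (WithTop L) // (ofLex p).1 ∈ H ∨ (ofLex p).2 = ⊥}

/-- The subset `C' = {(a,y) ∈ C : a ∈ H ∧ y ∈ L ∧ y ∈ G}` of `C = PLP1 A L H`. -/
def PLP1core {A L : Type*} [LinearOrder A] [LinearOrder L] (H : Set A) (G : Set L) :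
    Set (PLP1 A L H) :=
  {c | (ofLex c.val).1 ∈ H ∧ ∃ l ∈ G, (ofLex c.val).2 = ((l : WithTop L) : WithBot (WithTop L))}

/-!
A linear order is isomorphic to `ℝ` iff it is nonempty, dense, without endpoints, Dedekind complete
and has a countable subset meeting every `[x, y]` with `x < y`: a Cantor isomorphism between `ℚ` and
such a subset extends to `ℝ` by suprema. `C` and `D` are both partial lexicographic products
(`PLex`): `C` blows each point of `H` up to `WithBot (WithTop L)`, and `D` blows each point of `C'`
up to `WithTop B`. Completeness and separability descend from `D` to `C` and `A` along the
projections, whose upper adjoints pick the top of each fiber, and to `B` and `L`, which sit in `D`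
and `C` as open intervals. Density of `D` says exactly that the upper end of every covering pair of
`C` lies in `C'`; as `C'` is discretely embedded, so does the lower end, and read inside one copy of
`L` this yields the endpoint, discreteness and gap conditions on `L` and `G`. Conversely, these
conditions rebuild the density, completeness and separability of `D` fiber by fiber.
-/

open Set Function

def DedekindComplete (X : Type*) [Preorder X] : Prop :=
  ∀ S : Set X, S.Nonempty → BddAbove S → ∃ m, IsLUB S m

def IsWeaklyDense {X : Type*} [Preorder X] (Q : Set X) : Prop :=
  ∀ x y, x < y → ∃ q ∈ Q, x ≤ q ∧ q ≤ y

def OrderSeparable (X : Type*) [Preorder X] : Prop :=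
  ∃ Q : Set X, Q.Countable ∧ IsWeaklyDense Q

section OrderGeneralities

variable {X Y : Type*} [LinearOrder X] [LinearOrder Y]

theorem covBy_iff_lt_and_le_of_lt {p x : X} : p ⋖ x ↔ p < x ∧ ∀ y, y < x → y ≤ p :=
  ⟨fun h => ⟨h.lt, fun _ hy => h.le_of_lt hy⟩,
    fun h => ⟨h.1, fun y hpy hyx => (h.2 y hyx).not_gt hpy⟩⟩

theorem covBy_iff_lt_and_le_of_gt {x s : X} : x ⋖ s ↔ x < s ∧ ∀ y, x < y → s ≤ y :=
  ⟨fun h => ⟨h.lt, fun _ hy => h.ge_of_gt hy⟩,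
    fun h => ⟨h.1, fun y hxy hys => (h.2 y hxy).not_gt hys⟩⟩

theorem discretelyEmbedded_iff_s11 {Z : Set X} :
    DiscretelyEmbedded Z ↔ ∀ x ∈ Z, (∃ p ∈ Z, p ⋖ x) ∧ ∃ s ∈ Z, x ⋖ s := by
  refine forall₂_congr fun x _ => and_congr ?_ ?_
  · exact exists_congr fun p => by rw [covBy_iff_lt_and_le_of_lt]; tauto
  · exact exists_congr fun s => by rw [covBy_iff_lt_and_le_of_gt]; tauto

theorem DiscretelyEmbedded.mem_of_covBy {Z : Set X} (hZ : DiscretelyEmbedded Z) {x y : X}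
    (hxy : x ⋖ y) (hy : y ∈ Z) : x ∈ Z := by
  obtain ⟨⟨p, hp, hpy⟩, -⟩ := discretelyEmbedded_iff_s11.1 hZ y hy
  exact hxy.unique_left hpy ▸ hp

section ConvexEmbedding

variable (f : X ↪o Y) (hf : (range f).OrdConnected)
include hf

theorem DedekindComplete.of_orderEmbedding (hY : DedekindComplete Y) : DedekindComplete X := by
  rintro S ⟨s, hs⟩ ⟨u, hu⟩
  obtain ⟨m, hm⟩ := hY (f '' S) ⟨f s, mem_image_of_mem f hs⟩
    ⟨f u, forall_mem_image.2 fun x hx => f.le_iff_le.2 (hu hx)⟩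
  obtain ⟨x, rfl⟩ := hf.out (mem_range_self s) (mem_range_self u)
    ⟨hm.1 (mem_image_of_mem f hs), hm.2 (forall_mem_image.2 fun x hx => f.le_iff_le.2 (hu hx))⟩
  exact ⟨x, hm.of_image f.le_iff_le⟩

theorem OrderSeparable.of_orderEmbedding (hY : OrderSeparable Y) : OrderSeparable X := by
  obtain ⟨Q, hQc, hQ⟩ := hY
  refine ⟨f ⁻¹' Q, hQc.preimage f.injective, fun x y hxy => ?_⟩
  obtain ⟨q, hq, hxq, hqy⟩ := hQ (f x) (f y) (f.lt_iff_lt.2 hxy)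
  obtain ⟨z, rfl⟩ := hf.out (mem_range_self x) (mem_range_self y) ⟨hxq, hqy⟩
  exact ⟨z, hq, f.le_iff_le.1 hxq, f.le_iff_le.1 hqy⟩

theorem denselyOrdered_of_orderEmbedding [DenselyOrdered Y] : DenselyOrdered X := by
  refine ⟨fun x y hxy => ?_⟩
  obtain ⟨z, hxz, hzy⟩ := exists_between (f.lt_iff_lt.2 hxy)
  obtain ⟨w, rfl⟩ := hf.out (mem_range_self x) (mem_range_self y) ⟨hxz.le, hzy.le⟩
  exact ⟨w, f.lt_iff_lt.1 hxz, f.lt_iff_lt.1 hzy⟩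

end ConvexEmbedding

theorem apply_covBy_apply_iff_of_range_eq_Ioo (φ : X ↪o Y) {u v : Y}
    (hφ : range φ = Ioo u v) {x x' : X} : φ x ⋖ φ x' ↔ x ⋖ x' :=
  (hφ ▸ ordConnected_Ioo : (range φ).OrdConnected).apply_covBy_apply_iff φ

theorem DedekindComplete.of_galoisConnection {l : X → Y} {u : Y → X} (gc : GaloisConnection l u)
    (hl : Surjective l) (hX : DedekindComplete X) : DedekindComplete Y := by
  rintro S hS ⟨b, hb⟩
  obtain ⟨m, hm⟩ := hX (u '' S) (hS.image u)
    ⟨u b, forall_mem_image.2 fun y hy => gc.monotone_u (hb hy)⟩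
  have hlu : ∀ y, l (u y) = y := fun y => by
    obtain ⟨x, rfl⟩ := hl y
    exact gc.l_u_l_eq_l x
  refine ⟨l m, ?_⟩
  simpa only [image_image, hlu, image_id'] using gc.isLUB_l_image hm

theorem OrderSeparable.of_monotone_surjective {l : X → Y} (hl : Monotone l) (hs : Surjective l)
    (hX : OrderSeparable X) : OrderSeparable Y := by
  obtain ⟨Q, hQc, hQ⟩ := hX
  refine ⟨l '' Q, hQc.image l, fun y y' hyy' => ?_⟩
  obtain ⟨x, rfl⟩ := hs y
  obtain ⟨x', rfl⟩ := hs y'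
  obtain ⟨q, hq, h1, h2⟩ := hQ x x' (hl.reflect_lt hyy')
  exact ⟨l q, mem_image_of_mem l hq, hl h1, hl h2⟩

theorem IsWeaklyDense.mem_image {Q : Set X} (hQ : IsWeaklyDense Q) {l : X → Y} (hl : Monotone l)
    {x y : X} (hxy : x < y) (h : l x = l y) : l x ∈ l '' Q := by
  obtain ⟨q, hq, h1, h2⟩ := hQ x y hxy
  exact ⟨q, hq, le_antisymm (h ▸ hl h2) (hl h1)⟩

theorem IsWeaklyDense.exists_mem_Ioo [DenselyOrdered X] {Q : Set X} (hQ : IsWeaklyDense Q)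
    {x y : X} (hxy : x < y) : ∃ q ∈ Q, x < q ∧ q < y := by
  obtain ⟨a, hxa, hay⟩ := exists_between hxy
  obtain ⟨b, hab, hby⟩ := exists_between hay
  obtain ⟨q, hq, haq, hqb⟩ := hQ a b hab
  exact ⟨q, hq, hxa.trans_le haq, hqb.trans_lt hby⟩

theorem IsWeaklyDense.exists_le [NoMinOrder X] {Q : Set X} (hQ : IsWeaklyDense Q) (x : X) :
    ∃ q ∈ Q, q ≤ x :=
  let ⟨y, hy⟩ := exists_lt x
  let ⟨q, hq, _, hqx⟩ := hQ y x hy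
  ⟨q, hq, hqx⟩

theorem IsWeaklyDense.insert_top {Q : Set X} (hQ : IsWeaklyDense Q) :
    IsWeaklyDense (insert ⊤ (((↑) : X → WithTop X) '' Q)) := by
  intro x y hxy
  induction y with
  | top => exact ⟨⊤, mem_insert _ _, le_top, le_rfl⟩
  | coe b =>
    obtain ⟨a, rfl⟩ := WithTop.ne_top_iff_exists.1 (hxy.trans (WithTop.coe_lt_top b)).ne
    obtain ⟨q, hq, h1, h2⟩ := hQ a b (WithTop.coe_lt_coe.1 hxy)
    exact ⟨q, mem_insert_of_mem _ (mem_image_of_mem _ hq), WithTop.coe_le_coe.2 h1,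
      WithTop.coe_le_coe.2 h2⟩

theorem IsWeaklyDense.insert_bot {Q : Set X} (hQ : IsWeaklyDense Q) :
    IsWeaklyDense (insert ⊥ (((↑) : X → WithBot X) '' Q)) := by
  intro x y hxy
  induction x with
  | bot => exact ⟨⊥, mem_insert _ _, le_rfl, bot_le⟩
  | coe a =>
    obtain ⟨b, rfl⟩ := WithBot.ne_bot_iff_exists.1 ((WithBot.bot_lt_coe a).trans hxy).ne'
    obtain ⟨q, hq, h1, h2⟩ := hQ a b (WithBot.coe_lt_coe.1 hxy)
    exact ⟨q, mem_insert_of_mem _ (mem_image_of_mem _ hq), WithBot.coe_le_coe.2 h1,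
      WithBot.coe_le_coe.2 h2⟩

theorem WithTop.exists_isLUB (hX : DedekindComplete X) {S : Set (WithTop X)} (hS : S.Nonempty) :
    ∃ m, IsLUB S m := by
  by_cases htop : ⊤ ∈ S
  · exact ⟨⊤, IsGreatest.isLUB ⟨htop, fun _ _ => le_top⟩⟩
  have hS' : S = (↑) '' ((↑) ⁻¹' S : Set X) := by
    refine (image_preimage_eq_of_subset fun s hs => ?_).symm
    induction s with
    | top => exact absurd hs htop
    | coe x => exact mem_range_self x
  rw [hS'] at hS ⊢
  by_cases hbdd : BddAbove ((↑) ⁻¹' S : Set X)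
  · obtain ⟨m, hm⟩ := hX _ (hS.of_image) hbdd
    refine ⟨m, forall_mem_image.2 fun x hx => WithTop.coe_le_coe.2 (hm.1 hx), fun b hb => ?_⟩
    induction b with
    | top => exact le_top
    | coe b => exact WithTop.coe_le_coe.2 (hm.2 fun x hx => WithTop.coe_le_coe.1 (hb ⟨x, hx, rfl⟩))
  · refine ⟨⊤, fun _ _ => le_top, fun b hb => ?_⟩
    induction b with
    | top => exact le_rfl
    | coe b => exact absurd ⟨b, fun x hx => WithTop.coe_le_coe.1 (hb ⟨x, hx, rfl⟩)⟩ hbdd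

theorem WithBot.exists_isLUB (hX : ∀ S : Set X, S.Nonempty → ∃ m, IsLUB S m) (S : Set (WithBot X)) :
    ∃ m, IsLUB S m := by
  obtain hT | hT := ((↑) ⁻¹' S : Set X).eq_empty_or_nonempty
  · refine ⟨⊥, fun s hs => ?_, fun _ _ => bot_le⟩
    induction s with
    | bot => exact le_rfl
    | coe x => exact absurd (show x ∈ (↑) ⁻¹' S from hs) (hT ▸ notMem_empty x)
  obtain ⟨m, hm⟩ := hX _ hT
  refine ⟨m, fun s hs => ?_, fun b hb => ?_⟩
  · induction s with
    | bot => exact bot_le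
    | coe x => exact WithBot.coe_le_coe.2 (hm.1 hs)
  · obtain ⟨x, hx⟩ := hT
    induction b with
    | bot => exact absurd (hb hx) (by simp)
    | coe b => exact WithBot.coe_le_coe.2 (hm.2 fun x hx => WithBot.coe_le_coe.1 (hb hx))

end OrderGeneralities

theorem WithBot.WithTop.exists_coe_coe_of_covBy {L : Type*} [LinearOrder L] [NoMinOrder L]
    [NoMaxOrder L] [Nonempty L] {y y' : WithBot (WithTop L)} (h : y ⋖ y') :
    ∃ l l' : L, y = ((l : WithTop L) : WithBot (WithTop L)) ∧
      y' = ((l' : WithTop L) : WithBot (WithTop L)) ∧ l ⋖ l' := by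
  induction y' with
  | bot => exact absurd h.lt not_lt_bot
  | coe t' =>
    induction y with
    | bot => exact absurd (WithBot.bot_covBy_coe.1 h) (not_isMin t')
    | coe t =>
      replace h := WithBot.coe_covBy_coe.1 h
      induction t' with
      | top => exact absurd h WithTop.not_covBy_top
      | coe l' =>
        induction t with
        | top => exact absurd h.lt not_top_lt
        | coe l => exact ⟨l, l', rfl, rfl, WithTop.coe_covBy_coe.1 h⟩

section RealLine

variable {X : Type*} [LinearOrder X]

theorem dedekindComplete_real : DedekindComplete ℝ := fun _ => Real.exists_isLUB

theorem orderSeparable_real : OrderSeparable ℝ :=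
  ⟨range ((↑) : ℚ → ℝ), countable_range _, fun _ _ h =>
    let ⟨q, h1, h2⟩ := exists_rat_btwn h
    ⟨q, mem_range_self q, h1.le, h2.le⟩⟩

theorem nonempty_orderIso_real_of_rat_embedding (hX : DedekindComplete X) {j : ℚ → X}
    (hj : StrictMono j) (hdense : ∀ x y, x < y → ∃ r, x < j r ∧ j r < y)
    (hbot : ∀ x, ∃ r, j r < x) (htop : ∀ x, ∃ r, x < j r) : Nonempty (X ≃o ℝ) := by
  let below (x : X) : Set ℝ := (↑) '' {r : ℚ | j r < x}
  have hbelow_bdd (x : X) : BddAbove (below x) := by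
    obtain ⟨s, hs⟩ := htop x
    exact ⟨s, forall_mem_image.2 fun r hr => by exact_mod_cast (hj.lt_iff_lt.1 (hr.trans hs)).le⟩
  let f (x : X) : ℝ := sSup (below x)
  have lt_f {r : ℚ} {x : X} (h : j r < x) : (r : ℝ) < f x := by
    obtain ⟨s, hrs, hsx⟩ := hdense _ _ h
    exact (Rat.cast_lt.2 (hj.lt_iff_lt.1 hrs)).trans_le (le_csSup (hbelow_bdd x) ⟨s, hsx, rfl⟩)
  have f_le {r : ℚ} {x : X} (h : x ≤ j r) : f x ≤ r := by
    obtain ⟨s, hs⟩ := hbot x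
    exact csSup_le ⟨_, s, hs, rfl⟩ (forall_mem_image.2 fun s hs =>
      by exact_mod_cast (hj.lt_iff_lt.1 (hs.trans_le h)).le)
  have hf : StrictMono f := fun x y hxy => by
    obtain ⟨r, hxr, hry⟩ := hdense x y hxy
    exact (f_le hxr.le).trans_lt (lt_f hry)
  refine ⟨hf.orderIsoOfSurjective f fun t => ?_⟩
  let T : Set X := j '' {r : ℚ | (r : ℝ) < t}
  obtain ⟨r₀, hr₀⟩ := exists_rat_lt t
  obtain ⟨r₁, hr₁⟩ := exists_rat_gt t
  have hT_bdd : BddAbove T := ⟨j r₁, forall_mem_image.2 fun r hr =>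
    (hj (by exact_mod_cast (show (r : ℝ) < r₁ from hr.trans hr₁))).le⟩
  obtain ⟨x, hx⟩ := hX T ⟨j r₀, r₀, hr₀, rfl⟩ hT_bdd
  refine ⟨x, le_antisymm (not_lt.1 fun htx => ?_) (not_lt.1 fun hxt => ?_)⟩
  · obtain ⟨r, htr, hrx⟩ := exists_rat_btwn htx
    have hub : x ≤ j r := hx.2 (forall_mem_image.2 fun s hs =>
      (hj (by exact_mod_cast (show (s : ℝ) < r from hs.trans htr))).le)
    exact (f_le hub).not_gt hrx
  · obtain ⟨r, hxr, hrt⟩ := exists_rat_btwn hxt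
    obtain ⟨s, hrs, hst⟩ := exists_rat_btwn hrt
    have hsx : j s ≤ x := hx.1 ⟨s, hst, rfl⟩
    exact (lt_f ((hj (by exact_mod_cast hrs)).trans_le hsx)).not_gt hxr

theorem nonempty_orderIso_real_iff :
    Nonempty (X ≃o ℝ) ↔ Nonempty X ∧ DenselyOrdered X ∧ NoMinOrder X ∧ NoMaxOrder X ∧
      DedekindComplete X ∧ OrderSeparable X := by
  constructor
  · rintro ⟨e⟩
    refine ⟨⟨e.symm 0⟩, (denselyOrdered_iff_of_orderIsoClass e).2 inferInstance,
      ⟨fun x => ⟨e.symm (e x - 1), e.symm_apply_lt.2 (sub_one_lt _)⟩⟩,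
      ⟨fun x => ⟨e.symm (e x + 1), e.lt_symm_apply.2 (lt_add_one _)⟩⟩,
      DedekindComplete.of_orderEmbedding e.toOrderEmbedding (ordConnected_range e)
        dedekindComplete_real,
      OrderSeparable.of_orderEmbedding e.toOrderEmbedding (ordConnected_range e)
        orderSeparable_real⟩
  · rintro ⟨hne, hdense, hmin, hmax, hcomplete, Q, hQc, hQ⟩
    have hQ' (x y : X) (h : x < y) : ∃ q : Q, x < q ∧ (q : X) < y :=
      let ⟨q, hq, h⟩ := hQ.exists_mem_Ioo h
      ⟨⟨q, hq⟩, h⟩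
    have : Countable Q := hQc.to_subtype
    have : DenselyOrdered Q := ⟨fun a b hab => hQ' a b hab⟩
    have : NoMinOrder Q := ⟨fun a => let ⟨x, hx⟩ := exists_lt (a : X)
      let ⟨q, _, hq⟩ := hQ' x a hx; ⟨q, hq⟩⟩
    have : NoMaxOrder Q := ⟨fun a => let ⟨x, hx⟩ := exists_gt (a : X)
      let ⟨q, hq, _⟩ := hQ' a x hx; ⟨q, hq⟩⟩
    have : Nonempty Q := let ⟨x⟩ := hne; let ⟨y, hy⟩ := exists_gt x
      let ⟨q, _⟩ := hQ' x y hy; ⟨q⟩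
    obtain ⟨ψ⟩ := Order.iso_of_countable_dense ℚ Q
    refine nonempty_orderIso_real_of_rat_embedding hcomplete (j := fun r => (ψ r : X))
      (fun r s h => ψ.strictMono h) (fun x y h => ?_) (fun x => ?_) (fun x => ?_)
    · obtain ⟨q, hq⟩ := hQ' x y h
      exact ⟨ψ.symm q, by simpa using hq⟩
    · obtain ⟨y, hy⟩ := exists_lt x
      obtain ⟨q, -, hq⟩ := hQ' y x hy
      exact ⟨ψ.symm q, by simpa using hq⟩
    · obtain ⟨y, hy⟩ := exists_gt x
      obtain ⟨q, hq, -⟩ := hQ' x y hy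
      exact ⟨ψ.symm q, by simpa using hq⟩

theorem nonempty_orderIso_real_of_range_eq_Ioo {Y : Type*} [LinearOrder Y]
    (hY : Nonempty (Y ≃o ℝ)) (φ : X ↪o Y) {u v : Y} (hφ : range φ = Ioo u v) (huv : u < v) :
    Nonempty (X ≃o ℝ) := by
  obtain ⟨-, hdense, -, -, hcomplete, hsep⟩ := nonempty_orderIso_real_iff.1 hY
  have hconv : (range φ).OrdConnected := hφ ▸ ordConnected_Ioo
  have hmem (x : X) : φ x ∈ Ioo u v := hφ ▸ mem_range_self x
  have hrange {y : Y} (hy : y ∈ Ioo u v) : y ∈ range φ := hφ ▸ hy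
  refine nonempty_orderIso_real_iff.2 ⟨?_, denselyOrdered_of_orderEmbedding φ hconv,
    ⟨fun x => ?_⟩, ⟨fun x => ?_⟩, DedekindComplete.of_orderEmbedding φ hconv hcomplete,
    OrderSeparable.of_orderEmbedding φ hconv hsep⟩
  · obtain ⟨y, hy⟩ := exists_between huv
    obtain ⟨x, -⟩ := hrange hy
    exact ⟨x⟩
  · obtain ⟨y, h₁, h₂⟩ := exists_between (hmem x).1
    obtain ⟨x', rfl⟩ := hrange ⟨h₁, h₂.trans (hmem x).2⟩
    exact ⟨x', φ.lt_iff_lt.1 h₂⟩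
  · obtain ⟨y, h₁, h₂⟩ := exists_between (hmem x).2
    obtain ⟨x', rfl⟩ := hrange ⟨(hmem x).1.trans h₁, h₂⟩
    exact ⟨x', φ.lt_iff_lt.1 h₁⟩

end RealLine

section Gaps

variable {X : Type*} [LinearOrder X] {G : Set X}

theorem dense_iff_exists_mem_Ioo [NoMinOrder X] [NoMaxOrder X] {Q : Set X} :
    @Dense X (Preorder.topology X) Q ↔ ∀ a x b : X, a < x → x < b → ∃ q ∈ Q, a < q ∧ q < b := by
  let : TopologicalSpace X := Preorder.topology X
  have : OrderTopology X := ⟨rfl⟩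
  refine ⟨fun hQ a x b hax hxb => ?_, fun h x => mem_closure_iff_nhds.2 fun s hs => ?_⟩
  · obtain ⟨q, hq, hqQ⟩ := mem_closure_iff_nhds.1 (hQ x) _ (Ioo_mem_nhds hax hxb)
    exact ⟨q, hqQ, hq⟩
  · obtain ⟨l, u, hx, hsub⟩ := (mem_nhds_iff_exists_Ioo_subset' (exists_lt x) (exists_gt x)).1 hs
    obtain ⟨q, hqQ, hq⟩ := h l x u hx.1 hx.2
    exact ⟨q, hsub hq, hqQ⟩

theorem noMinOrder_iff_not_exists_isBot : NoMinOrder X ↔ ¬∃ m : X, ∀ x, m ≤ x := by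
  rw [← noBotOrder_iff_noMinOrder, noBotOrder_iff, not_exists]
  rfl

theorem noMaxOrder_iff_not_exists_isTop : NoMaxOrder X ↔ ¬∃ m : X, ∀ x, x ≤ m := by
  rw [← noTopOrder_iff_noMaxOrder, noTopOrder_iff, not_exists]
  rfl

theorem mem_of_covBy_of_not_exists_gap (hG : DiscretelyEmbedded G)
    (hgap : ¬∃ x y : X, x ∉ G ∧ y ∉ G ∧ x < y ∧ ¬∃ z, x < z ∧ z < y) {x y : X} (h : x ⋖ y) :
    y ∈ G := by
  by_contra hy
  have hx : x ∈ G := by_contra fun hx => hgap ⟨x, y, hx, hy, h.lt, fun ⟨_, h₁, h₂⟩ => h.2 h₁ h₂⟩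
  obtain ⟨-, s, hs, hxs⟩ := discretelyEmbedded_iff_s11.1 hG x hx
  exact hy (hxs.unique_right h ▸ hs)

theorem orderSeparable_of_dense [NoMinOrder X] [NoMaxOrder X] {Q : Set X} (hQc : Q.Countable)
    (hQ : @Dense X (Preorder.topology X) Q) (hGc : G.Countable)
    (hcov : ∀ x y : X, x ⋖ y → y ∈ G) : OrderSeparable X := by
  refine ⟨Q ∪ G, hQc.union hGc, fun x y hxy => ?_⟩
  by_cases h : x ⋖ y
  · exact ⟨y, Or.inr (hcov x y h), hxy.le, le_rfl⟩
  · obtain ⟨z, hxz, hzy⟩ : ∃ z, x < z ∧ z < y := by simpa [CovBy, hxy] using h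
    obtain ⟨q, hq, h₁, h₂⟩ := dense_iff_exists_mem_Ioo.1 hQ x z y hxz hzy
    exact ⟨q, Or.inl hq, h₁.le, h₂.le⟩

theorem exists_countable_dense_of_orderSeparable [NoMinOrder X] [NoMaxOrder X]
    (hX : OrderSeparable X) (hGc : G.Countable) (hcov : ∀ x y : X, x ⋖ y → y ∈ G) :
    ∃ Q : Set X, Q.Countable ∧ @Dense X (Preorder.topology X) Q := by
  obtain ⟨Q, hQc, hQ⟩ := hX
  refine ⟨Q ∪ G, hQc.union hGc, dense_iff_exists_mem_Ioo.2 fun a x b hax hxb => ?_⟩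
  by_cases hxG : x ∈ G
  · exact ⟨x, Or.inr hxG, hax, hxb⟩
  · obtain ⟨z, haz, hzx⟩ : ∃ z, a < z ∧ z < x := by
      simpa [CovBy, hax] using mt (hcov a x) hxG
    obtain ⟨q, hq, h₁, h₂⟩ := hQ z x hzx
    exact ⟨q, Or.inl hq, haz.trans_le h₁, h₂.trans_lt hxb⟩

end Gaps

/-- `PLP1 A L H` is `PLex A (WithBot (WithTop L)) H ⊥`, and the type II extension of `C` by `B`
along `C'` is `PLex C (WithTop B) C' ⊤`. -/
abbrev PLex (I F : Type*) [LinearOrder I] [LinearOrder F] (K : Set I) (e : F) : Type _ :=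
  {p : I ×ₗ F // (ofLex p).1 ∈ K ∨ (ofLex p).2 = e}

namespace PLex

variable {I F : Type*} [LinearOrder I] [LinearOrder F] {K : Set I} {e : F}

def fst (x : PLex I F K e) : I := (ofLex x.1).1

def snd (x : PLex I F K e) : F := (ofLex x.1).2

def mk (i : I) (f : F) (h : i ∈ K ∨ f = e) : PLex I F K e := ⟨toLex (i, f), h⟩

@[simp] theorem fst_mk {i : I} {f : F} {h : i ∈ K ∨ f = e} : (mk i f h).fst = i := rfl

@[simp] theorem snd_mk {i : I} {f : F} {h : i ∈ K ∨ f = e} : (mk i f h).snd = f := rfl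

theorem mem_or_snd_eq (x : PLex I F K e) : x.fst ∈ K ∨ x.snd = e := x.2

theorem ext {x y : PLex I F K e} (h₁ : x.fst = y.fst) (h₂ : x.snd = y.snd) : x = y :=
  Subtype.ext (Prod.ext h₁ h₂)

theorem lt_iff {x y : PLex I F K e} : x < y ↔ x.fst < y.fst ∨ x.fst = y.fst ∧ x.snd < y.snd :=
  Prod.Lex.lt_iff

theorem le_iff {x y : PLex I F K e} : x ≤ y ↔ x.fst < y.fst ∨ x.fst = y.fst ∧ x.snd ≤ y.snd :=
  Prod.Lex.le_iff (x := x.1) (y := y.1)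

theorem fst_mono : Monotone (fst : PLex I F K e → I) := fun x y h => by
  rcases le_iff.1 h with h | ⟨h, -⟩
  exacts [h.le, h.le]

theorem lt_of_fst_lt {x y : PLex I F K e} (h : x.fst < y.fst) : x < y := lt_iff.2 (Or.inl h)

theorem coords_injective : Injective (fun x : PLex I F K e => (x.fst, x.snd)) :=
  fun _ _ h => ext (congrArg Prod.fst h) (congrArg Prod.snd h)

theorem fst_surjective : Surjective (fst : PLex I F K e → I) := fun i => ⟨mk i e (Or.inr rfl), rfl⟩

def fiberEmb (i : I) (hi : i ∈ K) : F ↪o PLex I F K e where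
  toFun f := mk i f (Or.inl hi)
  inj' _ _ h := congrArg snd h
  map_rel_iff' {a b} := by
    change mk i a _ ≤ mk i b _ ↔ a ≤ b
    simp [le_iff]

theorem ordConnected_range_fiberEmb {i : I} (hi : i ∈ K) :
    (range (fiberEmb i hi : F ↪o PLex I F K e)).OrdConnected := by
  have : range (fiberEmb i hi : F ↪o PLex I F K e) = fst ⁻¹' {i} := by
    ext x
    refine ⟨by rintro ⟨f, rfl⟩; rfl, fun hx => ⟨x.snd, ext hx.symm rfl⟩⟩
  exact this ▸ ordConnected_singleton.preimage_mono fst_mono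

open Classical in
noncomputable def topOver [OrderTop F] (i : I) : PLex I F K e :=
  mk i (if i ∈ K then ⊤ else e) (by split_ifs with h; exacts [Or.inl h, Or.inr rfl])

theorem gc_fst_topOver [OrderTop F] : GaloisConnection fst (topOver : I → PLex I F K e) := by
  intro x i
  rcases lt_trichotomy x.fst i with h | h | h
  · exact ⟨fun _ => (lt_of_fst_lt h).le, fun _ => h.le⟩
  · refine ⟨fun _ => le_iff.2 (Or.inr ⟨h, ?_⟩), fun _ => h.le⟩
    simp only [topOver, snd_mk]
    split_ifs with hi
    exacts [le_top, (x.mem_or_snd_eq.resolve_left (h ▸ hi)).le]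
  · exact ⟨fun h' => absurd h' h.not_ge, fun h' => absurd (fst_mono h') h.not_ge⟩

theorem mk_le_of_fst_eq {i : I} (he : i ∉ K ∨ ∀ f, e ≤ f) {x : PLex I F K e} (hx : x.fst = i) :
    mk i e (Or.inr rfl) ≤ x := by
  refine le_iff.2 (Or.inr ⟨hx.symm, ?_⟩)
  rcases he with hi | he
  exacts [(x.mem_or_snd_eq.resolve_left (hx ▸ hi)).ge, he _]

theorem isMin_mk {i : I} (hi : IsMin i) (he : i ∉ K ∨ ∀ f, e ≤ f) :
    IsMin (mk i e (Or.inr rfl) : PLex I F K e) :=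
  fun _ hx => mk_le_of_fst_eq he (le_antisymm (fst_mono hx) (hi (fst_mono hx)))

theorem isMax_topOver [OrderTop F] {i : I} (hi : IsMax i) : IsMax (topOver i : PLex I F K e) :=
  fun _ hx => (gc_fst_topOver _ _).1 (hi (fst_mono hx))

theorem dedekindComplete_base [OrderTop F] (h : DedekindComplete (PLex I F K e)) :
    DedekindComplete I :=
  .of_galoisConnection gc_fst_topOver fst_surjective h

theorem orderSeparable_base (h : OrderSeparable (PLex I F K e)) : OrderSeparable I :=
  .of_monotone_surjective fst_mono fst_surjective h

theorem noMinOrder [NoMinOrder I] : NoMinOrder (PLex I F K e) :=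
  ⟨fun x => let ⟨i, hi⟩ := exists_lt x.fst; ⟨mk i e (Or.inr rfl), lt_of_fst_lt hi⟩⟩

theorem noMaxOrder [NoMaxOrder I] : NoMaxOrder (PLex I F K e) :=
  ⟨fun x => let ⟨i, hi⟩ := exists_gt x.fst; ⟨mk i e (Or.inr rfl), lt_of_fst_lt hi⟩⟩

theorem noMaxOrder_base [OrderTop F] [NoMaxOrder (PLex I F K e)] : NoMaxOrder I :=
  noMaxOrder_iff.2 fun _ hi => not_isMax _ (isMax_topOver (K := K) (e := e) hi)

theorem topOver_covBy [OrderTop F] {i j : I} (hij : i ⋖ j) (he : j ∉ K ∨ ∀ f, e ≤ f) :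
    (topOver i : PLex I F K e) ⋖ mk j e (Or.inr rfl) := by
  refine ⟨lt_of_fst_lt hij.lt, fun x h₁ h₂ => ?_⟩
  refine hij.2 (c := x.fst) ?_ ?_
  · exact lt_of_not_ge fun h => h₁.not_ge ((gc_fst_topOver _ _).1 h)
  · exact (fst_mono h₂.le).lt_of_ne fun h => h₂.not_ge (mk_le_of_fst_eq he h)

theorem fst_eq_of_covBy [DenselyOrdered I] {x y : PLex I F K e} (h : x ⋖ y) : x.fst = y.fst := by
  refine (fst_mono h.le).eq_of_not_lt fun hlt => ?_
  obtain ⟨i, h₁, h₂⟩ := exists_between hlt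
  exact h.2 (lt_of_fst_lt (y := mk i e (Or.inr rfl)) h₁) (lt_of_fst_lt h₂)

theorem isLUB_mk_of_isLUB_snd {S : Set (PLex I F K e)} {α : I} (hα : IsLUB (fst '' S) α) {m : F}
    (hm : IsLUB (snd '' {x ∈ S | x.fst = α}) m) (h : α ∈ K ∨ m = e) : IsLUB S (mk α m h) := by
  refine ⟨fun x hx => ?_, fun w hw => ?_⟩
  · rcases (hα.1 (mem_image_of_mem fst hx)).lt_or_eq with h | h
    · exact (lt_of_fst_lt h).le
    · exact le_iff.2 (Or.inr ⟨h, hm.1 ⟨x, ⟨hx, h⟩, rfl⟩⟩)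
  · rcases (hα.2 (forall_mem_image.2 fun x hx => fst_mono (hw hx))).lt_or_eq with h | h
    · exact (lt_of_fst_lt h).le
    refine le_iff.2 (Or.inr ⟨h, hm.2 ?_⟩)
    rintro _ ⟨x, ⟨hx, hxα⟩, rfl⟩
    rcases le_iff.1 (hw hx) with h' | ⟨-, h'⟩
    exacts [absurd (hxα.trans h) h'.ne, h']

theorem isLUB_mk_of_forall_fst_lt {S : Set (PLex I F K e)} {α : I} (hα : IsLUB (fst '' S) α)
    (hlt : ∀ x ∈ S, x.fst < α) (he : α ∉ K ∨ ∀ f, e ≤ f) : IsLUB S (mk α e (Or.inr rfl)) := by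
  refine ⟨fun x hx => (lt_of_fst_lt (hlt x hx)).le, fun w hw => ?_⟩
  rcases (hα.2 (forall_mem_image.2 fun x hx => fst_mono (hw hx))).lt_or_eq with h | h
  · exact (lt_of_fst_lt h).le
  · exact mk_le_of_fst_eq he h.symm

/-- A supremum `α ∈ K` of first coordinates that is not attained is reached at the bottom of the
fiber over `α`, so `hlim` asks that `e` be least in `F` unless `α` has a predecessor. -/
theorem dedekindComplete (hI : DedekindComplete I)
    (hF : ∀ S : Set F, S.Nonempty → ∃ m, IsLUB S m) (hlim : ∀ i ∈ K, (∀ f, e ≤ f) ∨ ∃ p, p ⋖ i) :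
    DedekindComplete (PLex I F K e) := by
  rintro S hS ⟨u, hu⟩
  obtain ⟨α, hα⟩ := hI (fst '' S) (hS.image fst)
    ⟨u.fst, forall_mem_image.2 fun x hx => fst_mono (hu hx)⟩
  by_cases hattained : α ∈ fst '' S
  · obtain ⟨x₀, hx₀S, hx₀⟩ := hattained
    have hx₀T : x₀.snd ∈ snd '' {x ∈ S | x.fst = α} := ⟨x₀, ⟨hx₀S, hx₀⟩, rfl⟩
    obtain ⟨m, hm⟩ := hF _ ⟨_, hx₀T⟩
    refine ⟨_, isLUB_mk_of_isLUB_snd hα hm (or_iff_not_imp_left.2 fun hαK => ?_)⟩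
    have hT : ∀ t ∈ snd '' {x ∈ S | x.fst = α}, t = e := by
      rintro _ ⟨x, ⟨-, hx⟩, rfl⟩
      exact x.mem_or_snd_eq.resolve_left (hx ▸ hαK)
    exact le_antisymm (hm.2 fun t ht => (hT t ht).le) (hT _ hx₀T ▸ hm.1 hx₀T)
  · have hlt : ∀ x ∈ S, x.fst < α := fun x hx =>
      (hα.1 (mem_image_of_mem fst hx)).lt_of_ne fun h => hattained ⟨x, hx, h⟩
    refine ⟨_, isLUB_mk_of_forall_fst_lt hα hlt (or_iff_not_imp_left.2 fun hαK =>
      (hlim α (not_not.1 hαK)).resolve_right ?_)⟩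
    rintro ⟨p, hp⟩
    exact (hα.2 (forall_mem_image.2 fun x hx => hp.le_of_lt (hlt x hx))).not_gt hp.lt

theorem orderSeparable [OrderTop F] (hI : OrderSeparable I) (hK : K.Countable)
    (hF : ∃ QF : Set F, QF.Countable ∧ IsWeaklyDense QF ∧ ⊤ ∈ QF ∧ ∀ f, ∃ q ∈ QF, q ≤ f) :
    OrderSeparable (PLex I F K e) := by
  obtain ⟨QI, hQIc, hQI⟩ := hI
  obtain ⟨QF, hQFc, hQF, htop, hlow⟩ := hF
  let Q := (fun x : PLex I F K e => (x.fst, x.snd)) ⁻¹' (QI ×ˢ {e} ∪ K ×ˢ QF)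
  have mk_mem {i f h} (hf : i ∈ QI ∧ f = e ∨ i ∈ K ∧ f ∈ QF) : mk i f h ∈ Q := hf
  have topOver_mem {i} (hi : i ∈ QI) : topOver i ∈ Q := by
    by_cases hiK : i ∈ K
    · exact mk_mem (Or.inr ⟨hiK, by simpa [hiK] using htop⟩)
    · exact mk_mem (Or.inl ⟨hi, by simp [hiK]⟩)
  refine ⟨Q, ((hQIc.prod (countable_singleton e)).union (hK.prod hQFc)).preimage coords_injective,
    fun x y hxy => ?_⟩
  rcases lt_iff.1 hxy with hlt | ⟨heq, hlt⟩
  · obtain ⟨q, hq, hxq, hqy⟩ := hQI _ _ hlt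
    rcases hxq.eq_or_lt with rfl | hxq
    · exact ⟨topOver x.fst, topOver_mem hq, (gc_fst_topOver _ _).1 le_rfl,
        (lt_of_fst_lt (x := topOver x.fst) hlt).le⟩
    rcases hqy.lt_or_eq with hqy | rfl
    · exact ⟨mk q e (Or.inr rfl), mk_mem (Or.inl ⟨hq, rfl⟩), (lt_of_fst_lt hxq).le,
        (lt_of_fst_lt hqy).le⟩
    rcases y.mem_or_snd_eq with hyK | hye
    · obtain ⟨f, hf, hfy⟩ := hlow y.snd
      exact ⟨mk y.fst f (Or.inl hyK), mk_mem (Or.inr ⟨hyK, hf⟩),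
        (lt_of_fst_lt (y := mk y.fst f _) hxq).le,
        le_iff.2 (Or.inr ⟨rfl, hfy⟩)⟩
    · exact ⟨y, Or.inl ⟨hq, hye⟩, hxy.le, le_rfl⟩
  · have hxK : x.fst ∈ K := by
      by_contra hxK
      rw [x.mem_or_snd_eq.resolve_left hxK, y.mem_or_snd_eq.resolve_left (heq ▸ hxK)] at hlt
      exact hlt.false
    obtain ⟨f, hf, hxf, hfy⟩ := hQF _ _ hlt
    exact ⟨mk x.fst f (Or.inl hxK), mk_mem (Or.inr ⟨hxK, hf⟩), le_iff.2 (Or.inr ⟨rfl, hxf⟩),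
      le_iff.2 (Or.inr ⟨heq, hfy⟩)⟩

theorem snd_covBy_snd {x y : PLex I F K e} (hfst : x.fst = y.fst) (hK : y.fst ∈ K) (h : x ⋖ y) :
    x.snd ⋖ y.snd := by
  refine ((ordConnected_range_fiberEmb (e := e) hK).apply_covBy_apply_iff
    (fiberEmb y.fst hK)).1 ?_
  rwa [show fiberEmb y.fst hK x.snd = x from ext hfst.symm rfl,
    show fiberEmb y.fst hK y.snd = y from ext rfl rfl]

theorem countable_of_orderSeparable (hX : OrderSeparable (PLex I F K e)) {f f' : F} (h : f < f') :
    K.Countable := by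
  obtain ⟨Q, hQc, hQ⟩ := hX
  exact (hQc.image fst).mono fun i hi => hQ.mem_image fst_mono
    (x := mk i f (Or.inl hi)) (y := mk i f' (Or.inl hi)) (lt_iff.2 (Or.inr ⟨rfl, h⟩)) rfl

section WithTop

variable {B : Type*} [LinearOrder B]

theorem denselyOrdered_withTop [DenselyOrdered B] [NoMinOrder B] [NoMaxOrder B] [Nonempty B]
    (hK : ∀ i j : I, i ⋖ j → j ∈ K) : DenselyOrdered (PLex I (WithTop B) K ⊤) := by
  refine ⟨fun x y hxy => ?_⟩
  rcases lt_iff.1 hxy with hlt | ⟨heq, hlt⟩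
  · by_cases hcov : x.fst ⋖ y.fst
    · obtain ⟨f, hf⟩ := exists_lt y.snd
      exact ⟨mk y.fst f (Or.inl (hK _ _ hcov)), lt_of_fst_lt hlt, lt_iff.2 (Or.inr ⟨rfl, hf⟩)⟩
    · obtain ⟨i, h₁, h₂⟩ : ∃ i, x.fst < i ∧ i < y.fst := by simpa [CovBy, hlt] using hcov
      exact ⟨mk i ⊤ (Or.inr rfl), lt_of_fst_lt h₁, lt_of_fst_lt h₂⟩
  · have hxK : x.fst ∈ K := x.mem_or_snd_eq.resolve_right hlt.ne_top
    obtain ⟨f, h₁, h₂⟩ := exists_between hlt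
    exact ⟨mk x.fst f (Or.inl hxK), lt_iff.2 (Or.inr ⟨rfl, h₁⟩), lt_iff.2 (Or.inr ⟨heq, h₂⟩)⟩

theorem mem_of_covBy_withTop [DenselyOrdered (PLex I (WithTop B) K ⊤)] {i j : I} (h : i ⋖ j) :
    j ∈ K :=
  by_contra fun hj => not_covBy (topOver_covBy (K := K) (e := (⊤ : WithTop B)) h (Or.inl hj))

theorem range_coe_fiberEmb {p i : I} (hpi : p ⋖ i) (hi : i ∈ K) :
    range (WithTop.coeOrderHom.trans (fiberEmb i hi) : B ↪o PLex I (WithTop B) K ⊤) =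
      Ioo (topOver p) (mk i ⊤ (Or.inr rfl)) := by
  ext x
  refine ⟨?_, fun ⟨h₁, h₂⟩ => ?_⟩
  · rintro ⟨b, rfl⟩
    exact ⟨lt_of_fst_lt hpi.lt, lt_iff.2 (Or.inr ⟨rfl, WithTop.coe_lt_top b⟩)⟩
  · have hfst : x.fst = i := le_antisymm (fst_mono h₂.le)
      (hpi.ge_of_gt (lt_of_not_ge fun h => h₁.not_ge ((gc_fst_topOver _ _).1 h)))
    have hsnd : x.snd < ⊤ := by
      rcases lt_iff.1 h₂ with h | ⟨-, h⟩
      exacts [absurd hfst h.ne, h]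
    obtain ⟨b, hb⟩ := WithTop.ne_top_iff_exists.1 hsnd.ne
    exact ⟨b, ext hfst.symm hb⟩

theorem nonempty_orderIso_real_of_covBy (hX : Nonempty (PLex I (WithTop B) K ⊤ ≃o ℝ)) {p i : I}
    (hpi : p ⋖ i) (hi : i ∈ K) : Nonempty (B ≃o ℝ) :=
  nonempty_orderIso_real_of_range_eq_Ioo hX _ (range_coe_fiberEmb hpi hi) (lt_of_fst_lt hpi.lt)

end WithTop

end PLex

namespace PLP1

open PLex

variable {A L : Type*} [LinearOrder A] [LinearOrder L] {H : Set A} {G : Set L}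

def embL (a : A) (ha : a ∈ H) : L ↪o PLP1 A L H :=
  (WithTop.coeOrderHom.trans WithBot.coeOrderHom).trans (fiberEmb a ha)

theorem mk_bot_lt_embL {a : A} (ha : a ∈ H) (l : L) : mk a ⊥ (Or.inr rfl) < embL a ha l :=
  lt_iff.2 (Or.inr ⟨rfl, WithBot.bot_lt_coe _⟩)

theorem embL_lt_mk_top {a : A} (ha : a ∈ H) (l : L) :
    embL a ha l < mk a ((⊤ : WithTop L) : WithBot (WithTop L)) (Or.inl ha) :=
  lt_iff.2 (Or.inr ⟨rfl, WithBot.coe_lt_coe.2 (WithTop.coe_lt_top l)⟩)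

theorem range_embL {a : A} (ha : a ∈ H) :
    range (embL a ha) =
      Ioo (mk a ⊥ (Or.inr rfl)) (mk a ((⊤ : WithTop L) : WithBot (WithTop L)) (Or.inl ha)) := by
  ext c
  refine ⟨?_, fun ⟨h₁, h₂⟩ => ?_⟩
  · rintro ⟨l, rfl⟩
    exact ⟨mk_bot_lt_embL ha l, embL_lt_mk_top ha l⟩
  · have hfst : fst c = a := le_antisymm (fst_mono h₂.le) (fst_mono h₁.le)
    have hbot : ⊥ < snd c := by
      rcases lt_iff.1 h₁ with h | ⟨-, h⟩
      exacts [absurd hfst h.ne', h]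
    have htop : snd c < ((⊤ : WithTop L) : WithBot (WithTop L)) := by
      rcases lt_iff.1 h₂ with h | ⟨-, h⟩
      exacts [absurd hfst h.ne, h]
    obtain ⟨t, ht⟩ := WithBot.ne_bot_iff_exists.1 hbot.ne'
    obtain ⟨l, rfl⟩ := WithTop.ne_top_iff_exists.1 (WithBot.coe_lt_coe.1 (ht ▸ htop)).ne
    exact ⟨l, ext hfst.symm ht⟩

theorem embL_covBy_embL_iff {a : A} (ha : a ∈ H) {l l' : L} :
    embL a ha l ⋖ embL a ha l' ↔ l ⋖ l' :=
  apply_covBy_apply_iff_of_range_eq_Ioo _ (range_embL ha)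

theorem embL_mem_core_iff {a : A} (ha : a ∈ H) {l : L} : embL a ha l ∈ PLP1core H G ↔ l ∈ G :=
  ⟨fun ⟨_, _, hl', h⟩ => WithTop.coe_injective (WithBot.coe_injective h) ▸ hl',
    fun hl => ⟨ha, l, hl, rfl⟩⟩

theorem exists_eq_embL_of_mem_core {c : PLP1 A L H} (hc : c ∈ PLP1core H G) :
    ∃ l ∈ G, c = embL (fst c) hc.1 l :=
  let ⟨l, hl, h⟩ := hc.2
  ⟨l, hl, ext rfl h⟩

theorem mk_bot_not_mem_core {a : A} {h} : (mk a ⊥ h : PLP1 A L H) ∉ PLP1core H G :=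
  fun ⟨_, _, _, h⟩ => WithBot.bot_ne_coe h

theorem mk_top_not_mem_core {a : A} {h} :
    (mk a ((⊤ : WithTop L) : WithBot (WithTop L)) h : PLP1 A L H) ∉ PLP1core H G :=
  fun ⟨_, _, _, h⟩ => WithTop.top_ne_coe (WithBot.coe_injective h)

theorem mk_bot_covBy_embL {a : A} (ha : a ∈ H) {l : L} (hl : IsMin l) :
    (mk a ⊥ (Or.inr rfl) : PLP1 A L H) ⋖ embL a ha l := by
  refine ⟨mk_bot_lt_embL ha l, fun c h₁ h₂ => ?_⟩
  obtain ⟨l', rfl⟩ : c ∈ range (embL a ha) :=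
    by rw [range_embL ha]; exact ⟨h₁, h₂.trans (embL_lt_mk_top ha l)⟩
  exact ((embL a ha).lt_iff_lt.1 h₂).not_isMin hl

theorem embL_covBy_mk_top {a : A} (ha : a ∈ H) {l : L} (hl : IsMax l) :
    embL a ha l ⋖ (mk a ((⊤ : WithTop L) : WithBot (WithTop L)) (Or.inl ha) : PLP1 A L H) := by
  refine ⟨embL_lt_mk_top ha l, fun c h₁ h₂ => ?_⟩
  obtain ⟨l', rfl⟩ : c ∈ range (embL a ha) :=
    by rw [range_embL ha]; exact ⟨(mk_bot_lt_embL ha l).trans h₁, h₂⟩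
  exact ((embL a ha).lt_iff_lt.1 h₁).not_isMax hl

theorem ordConnected_range_embL {a : A} (ha : a ∈ H) :
    (range (embL (L := L) a ha)).OrdConnected := by
  rw [range_embL ha]
  exact ordConnected_Ioo

theorem mem_range_embL_of_covBy_embL {a : A} (ha : a ∈ H) {l : L} {c : PLP1 A L H}
    (hc : c ∈ PLP1core H G) (h : c ⋖ embL a ha l) : c ∈ range (embL a ha) := by
  rw [range_embL ha]
  refine ⟨(h.le_of_lt (mk_bot_lt_embL ha l)).lt_of_ne ?_, h.lt.trans (embL_lt_mk_top ha l)⟩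
  rintro rfl
  exact mk_bot_not_mem_core hc

theorem mem_range_embL_of_embL_covBy {a : A} (ha : a ∈ H) {l : L} {c : PLP1 A L H}
    (hc : c ∈ PLP1core H G) (h : embL a ha l ⋖ c) : c ∈ range (embL a ha) := by
  rw [range_embL ha]
  refine ⟨(mk_bot_lt_embL ha l).trans h.lt, (h.ge_of_gt (embL_lt_mk_top ha l)).lt_of_ne ?_⟩
  rintro rfl
  exact mk_top_not_mem_core hc

theorem mem_core_of_covBy [DenselyOrdered A] [NoMinOrder L] [NoMaxOrder L] [Nonempty L]
    (hG : ∀ l l' : L, l ⋖ l' → l' ∈ G) {c c' : PLP1 A L H} (h : c ⋖ c') : c' ∈ PLP1core H G := by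
  have hfst := fst_eq_of_covBy h
  have ha : fst c' ∈ H := (mem_or_snd_eq c').resolve_right fun hbot => by
    rcases lt_iff.1 h.lt with h' | ⟨-, h'⟩
    exacts [h'.ne hfst, not_lt_bot (hbot ▸ h')]
  obtain ⟨l, l', -, hl', hll'⟩ :=
    WithBot.WithTop.exists_coe_coe_of_covBy (snd_covBy_snd hfst ha h)
  exact ⟨ha, l', hG l l' hll', hl'⟩

theorem discretelyEmbedded_core (hG : DiscretelyEmbedded G) :
    DiscretelyEmbedded (PLP1core H G) := by
  refine discretelyEmbedded_iff_s11.2 fun c hc => ?_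
  obtain ⟨l, hl, hcl⟩ := exists_eq_embL_of_mem_core hc
  rw [hcl]
  obtain ⟨⟨p, hp, hpl⟩, ⟨s, hs, hls⟩⟩ := discretelyEmbedded_iff_s11.1 hG l hl
  exact ⟨⟨_, (embL_mem_core_iff _).2 hp, (embL_covBy_embL_iff _).2 hpl⟩,
    ⟨_, (embL_mem_core_iff _).2 hs, (embL_covBy_embL_iff _).2 hls⟩⟩

theorem discretelyEmbedded_of_core {a : A} (ha : a ∈ H) (hC : DiscretelyEmbedded (PLP1core H G)) :
    DiscretelyEmbedded G := by
  refine discretelyEmbedded_iff_s11.2 fun l hl => ?_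
  obtain ⟨⟨p, hp, hpl⟩, ⟨s, hs, hls⟩⟩ :=
    discretelyEmbedded_iff_s11.1 hC _ ((embL_mem_core_iff ha).2 hl)
  obtain ⟨l₁, rfl⟩ := mem_range_embL_of_covBy_embL ha hp hpl
  obtain ⟨l₂, rfl⟩ := mem_range_embL_of_embL_covBy ha hs hls
  exact ⟨⟨l₁, (embL_mem_core_iff ha).1 hp, (embL_covBy_embL_iff ha).1 hpl⟩,
    ⟨l₂, (embL_mem_core_iff ha).1 hs, (embL_covBy_embL_iff ha).1 hls⟩⟩

theorem countable_core (hH : H.Countable) (hG : G.Countable) : (PLP1core H G).Countable :=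
  ((hH.prod (hG.image fun l : L => ((l : WithTop L) : WithBot (WithTop L)))).preimage
    coords_injective).mono fun _ ⟨ha, l, hl, h⟩ => show _ ∧ _ from ⟨ha, l, hl, h.symm⟩

theorem dedekindComplete (hA : DedekindComplete A) (hL : DedekindComplete L) :
    DedekindComplete (PLP1 A L H) :=
  PLex.dedekindComplete hA
    (fun S _ => WithBot.exists_isLUB (fun _ hT => WithTop.exists_isLUB hL hT) S)
    fun _ _ => Or.inl fun _ => bot_le

theorem orderSeparable (hA : OrderSeparable A) (hH : H.Countable) (hL : OrderSeparable L) :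
    OrderSeparable (PLP1 A L H) := by
  obtain ⟨Q, hQc, hQ⟩ := hL
  refine PLex.orderSeparable hA hH ?_
  exact ⟨_, (((hQc.image _).insert ⊤).image _).insert ⊥,
    hQ.insert_top.insert_bot, mem_insert_of_mem _ ⟨⊤, mem_insert _ _, rfl⟩,
    fun _ => ⟨⊥, mem_insert _ _, bot_le⟩⟩

end PLP1

abbrev PLE2 (A L B : Type*) [LinearOrder A] [LinearOrder L] [LinearOrder B] (H : Set A)
    (G : Set L) : Type _ :=
  PLex (PLP1 A L H) (WithTop B) (PLP1core H G) ⊤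

namespace PLE2

open PLex PLP1

variable {A L B : Type*} [LinearOrder A] [LinearOrder L] [LinearOrder B] {H : Set A} {G : Set L}

theorem nonempty_orderIso_real_base (hD : Nonempty (PLE2 A L B H G ≃o ℝ)) :
    Nonempty (A ≃o ℝ) := by
  obtain ⟨⟨d⟩, hdense, hmin, hmax, hcomplete, hsep⟩ := nonempty_orderIso_real_iff.1 hD
  have : NoMaxOrder (PLP1 A L H) := noMaxOrder_base (F := WithTop B) (K := PLP1core H G) (e := ⊤)
  refine nonempty_orderIso_real_iff.2 ⟨⟨fst (fst d)⟩, ⟨fun a a' haa' => ?_⟩,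
    noMinOrder_iff.2 fun a ha => ?_, noMaxOrder_base (F := WithBot (WithTop L)) (K := H) (e := ⊥),
    dedekindComplete_base (dedekindComplete_base hcomplete),
    orderSeparable_base (orderSeparable_base hsep)⟩
  · by_contra! hno
    have hcov : a ⋖ a' := ⟨haa', fun c h₁ h₂ => (hno c h₁).not_gt h₂⟩
    have : (topOver a : PLP1 A L H) ⋖ mk a' ⊥ (Or.inr rfl) :=
      topOver_covBy hcov (Or.inr fun _ => bot_le)
    exact mk_bot_not_mem_core (mem_of_covBy_withTop (B := B) (K := PLP1core H G) this)
  · exact not_isMin _ (isMin_mk (K := PLP1core H G) (e := (⊤ : WithTop B))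
      (isMin_mk ha (Or.inr fun _ => bot_le)) (Or.inl mk_bot_not_mem_core))

theorem conditions_of_nonempty_orderIso_real (hH : H.Nonempty) (hG : G.Nonempty)
    (hCd : DiscretelyEmbedded (PLP1core H G)) (hD : Nonempty (PLE2 A L B H G ≃o ℝ)) :
    Nonempty (A ≃o ℝ) ∧ Nonempty (B ≃o ℝ) ∧ H.Countable ∧ G.Countable ∧ DedekindComplete L ∧
      (∃ Q : Set L, Q.Countable ∧ @Dense L (Preorder.topology L) Q) ∧
      (¬∃ m : L, ∀ x, m ≤ x) ∧ (¬∃ m : L, ∀ x, x ≤ m) ∧ DiscretelyEmbedded G ∧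
      ¬∃ x y : L, x ∉ G ∧ y ∉ G ∧ x < y ∧ ¬∃ z, x < z ∧ z < y := by
  obtain ⟨-, hdense, -, -, hcomplete, hsep⟩ := nonempty_orderIso_real_iff.1 hD
  obtain ⟨a, ha⟩ := id hH
  obtain ⟨g, hg⟩ := hG
  have hcov {c c' : PLP1 A L H} (h : c ⋖ c') : c ∈ PLP1core H G ∧ c' ∈ PLP1core H G :=
    have hc' := mem_of_covBy_withTop (B := B) (K := PLP1core H G) h
    ⟨hCd.mem_of_covBy h hc', hc'⟩
  have hLcov (l l' : L) (h : l ⋖ l') : l ∈ G ∧ l' ∈ G := by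
    simpa only [embL_mem_core_iff] using hcov ((embL_covBy_embL_iff ha).2 h)
  have hLmin : NoMinOrder L :=
    noMinOrder_iff.2 fun l hl => mk_bot_not_mem_core (hcov (mk_bot_covBy_embL ha hl)).1
  have hLmax : NoMaxOrder L :=
    noMaxOrder_iff.2 fun l hl => mk_top_not_mem_core (hcov (embL_covBy_mk_top ha hl)).2
  have hg' := (embL_mem_core_iff ha).2 hg
  obtain ⟨⟨p, -, hp⟩, -⟩ := discretelyEmbedded_iff_s11.1 hCd _ hg'
  obtain ⟨eB⟩ := nonempty_orderIso_real_of_covBy hD hp hg'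
  have hGc : G.Countable :=
    ((countable_of_orderSeparable hsep (WithTop.coe_lt_top (eB.symm 0))).preimage
      (embL a ha).injective).mono fun _ hl => (embL_mem_core_iff ha).2 hl
  have hLsep := OrderSeparable.of_orderEmbedding _ (ordConnected_range_embL ha)
    (orderSeparable_base hsep)
  refine ⟨nonempty_orderIso_real_base hD, ⟨eB⟩,
    countable_of_orderSeparable (orderSeparable_base hsep) (WithBot.bot_lt_coe ⊤), hGc,
    DedekindComplete.of_orderEmbedding _ (ordConnected_range_embL ha)
      (dedekindComplete_base hcomplete),
    exists_countable_dense_of_orderSeparable hLsep hGc fun l l' h => (hLcov l l' h).2,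
    noMinOrder_iff_not_exists_isBot.1 hLmin, noMaxOrder_iff_not_exists_isTop.1 hLmax,
    discretelyEmbedded_of_core ha hCd, ?_⟩
  rintro ⟨x, y, hx, -, hxy, hno⟩
  exact hx (hLcov x y ⟨hxy, fun z h₁ h₂ => hno ⟨z, h₁, h₂⟩⟩).1

theorem nonempty_orderIso_real_of_conditions (hG : G.Nonempty) (hA : Nonempty (A ≃o ℝ))
    (hB : Nonempty (B ≃o ℝ)) (hHc : H.Countable) (hGc : G.Countable) (hLc : DedekindComplete L)
    (hLd : ∃ Q : Set L, Q.Countable ∧ @Dense L (Preorder.topology L) Q)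
    (hLmin : ¬∃ m : L, ∀ x, m ≤ x) (hLmax : ¬∃ m : L, ∀ x, x ≤ m) (hGd : DiscretelyEmbedded G)
    (hgap : ¬∃ x y : L, x ∉ G ∧ y ∉ G ∧ x < y ∧ ¬∃ z, x < z ∧ z < y) :
    DiscretelyEmbedded (PLP1core H G) ∧ Nonempty (PLE2 A L B H G ≃o ℝ) := by
  obtain ⟨⟨a⟩, hAdense, hAmin, hAmax, hAcomplete, hAsep⟩ := nonempty_orderIso_real_iff.1 hA
  obtain ⟨hBne, hBdense, hBmin, hBmax, hBcomplete, QB, hQBc, hQB⟩ :=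
    nonempty_orderIso_real_iff.1 hB
  obtain ⟨QL, hQLc, hQL⟩ := hLd
  have : NoMinOrder L := noMinOrder_iff_not_exists_isBot.2 hLmin
  have : NoMaxOrder L := noMaxOrder_iff_not_exists_isTop.2 hLmax
  have : Nonempty L := ⟨hG.some⟩
  have : NoMinOrder (PLP1 A L H) := PLex.noMinOrder
  have : NoMaxOrder (PLP1 A L H) := PLex.noMaxOrder
  have hLcov (l l' : L) (h : l ⋖ l') : l' ∈ G := mem_of_covBy_of_not_exists_gap hGd hgap h
  have hCd : DiscretelyEmbedded (PLP1core H G) := discretelyEmbedded_core hGd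
  have hlim (c) (hc : c ∈ PLP1core H G) : (∀ z : WithTop B, ⊤ ≤ z) ∨ ∃ p, p ⋖ c :=
    let ⟨⟨p, _, hp⟩, _⟩ := discretelyEmbedded_iff_s11.1 hCd c hc
    Or.inr ⟨p, hp⟩
  have hCsep := PLP1.orderSeparable hAsep hHc (orderSeparable_of_dense hQLc hQL hGc hLcov)
  refine ⟨hCd, nonempty_orderIso_real_iff.2 ⟨⟨mk (mk a ⊥ (Or.inr rfl)) ⊤ (Or.inr rfl)⟩,
    denselyOrdered_withTop fun _ _ => mem_core_of_covBy hLcov, PLex.noMinOrder, PLex.noMaxOrder,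
    PLex.dedekindComplete (PLP1.dedekindComplete hAcomplete hLc)
      (fun _ hS => WithTop.exists_isLUB hBcomplete hS) hlim,
    PLex.orderSeparable hCsep (countable_core hHc hGc)
      ⟨_, (hQBc.image _).insert ⊤, hQB.insert_top, mem_insert _ _, hQB.insert_top.exists_le⟩⟩⟩

end PLE2

theorem stmt_11_general {A L B : Type*} [LinearOrder A] [LinearOrder L] [LinearOrder B]
    (H : Set A) (hH : H.Nonempty) (G : Set L) (hG : G.Nonempty) :
    (DiscretelyEmbedded (PLP1core H G) ∧
      Nonempty ({q : PLP1 A L H ×ₗ WithTop B //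
        (ofLex q).1 ∈ PLP1core H G ∨ (ofLex q).2 = ⊤} ≃o ℝ)) ↔
    (Nonempty (A ≃o ℝ) ∧ Nonempty (B ≃o ℝ) ∧
      H.Countable ∧ G.Countable ∧
      (∀ S : Set L, S.Nonempty → BddAbove S → ∃ m, IsLUB S m) ∧
      (∃ Q : Set L, Q.Countable ∧ @Dense L (Preorder.topology L) Q) ∧
      (¬∃ m : L, ∀ x, m ≤ x) ∧ (¬∃ m : L, ∀ x, x ≤ m) ∧
      DiscretelyEmbedded G ∧
      ¬∃ x y : L, x ∉ G ∧ y ∉ G ∧ x < y ∧ ¬∃ z, x < z ∧ z < y) :=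
  ⟨fun ⟨hCd, hD⟩ => PLE2.conditions_of_nonempty_orderIso_real hH hG hCd hD,
    fun ⟨hA, hB, hHc, hGc, hLc, hLd, hLmin, hLmax, hGd, hgap⟩ =>
      PLE2.nonempty_orderIso_real_of_conditions hG hA hB hHc hGc hLc hLd hLmin hLmax hGd hgap⟩

/-- with `C`, `C'` as above and
`D = {(c,z) ∈ C ×ₗ WithTop B : c ∈ C' ∨ z = ⊤}`, the following are equivalent:
(1) `C'` is discretely embedded into `C` and `D ≃o ℝ`;
(2) `A ≃o ℝ`, `B ≃o ℝ`, `H` and `G` are countable, `L` is Dedekind complete, `L` has a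
countable dense subset (w.r.t. the order topology), `L` has neither a least nor a greatest
element, `G` is discretely embedded into `L`, and no two elements of `L ∖ G` form a gap. -/
theorem stmt_11 {A L B : Type*} [LinearOrder A] [LinearOrder L] [LinearOrder B] [Nonempty B]
    (H : Set A) (hH : H.Nonempty) (G : Set L) (hG : G.Nonempty) :
    (DiscretelyEmbedded (PLP1core H G) ∧
      Nonempty ({q : PLP1 A L H ×ₗ WithTop B //
        (ofLex q).1 ∈ PLP1core H G ∨ (ofLex q).2 = ⊤} ≃o ℝ)) ↔
    (Nonempty (A ≃o ℝ) ∧ Nonempty (B ≃o ℝ) ∧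
      H.Countable ∧ G.Countable ∧
      (∀ S : Set L, S.Nonempty → BddAbove S → ∃ m, IsLUB S m) ∧
      (∃ Q : Set L, Q.Countable ∧ @Dense L (Preorder.topology L) Q) ∧
      (¬∃ m : L, ∀ x, m ≤ x) ∧ (¬∃ m : L, ∀ x, x ≤ m) ∧
      DiscretelyEmbedded G ∧
      ¬∃ x y : L, x ∉ G ∧ y ∉ G ∧ x < y ∧ ¬∃ z, x < z ∧ z < y) :=
  stmt_11_general H hH G hG
end

section
/- Define linear orders by U₀ = ℝ and, recursively, U_{n+1} = ℤ ×ₗ WithTop Uₙ. Then for every natural number n, the linear order Uₙ is order-isomorphic to ℝ. -/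
/-!
With `e : α ≃o ℝ`, composing with `ℝ ≃o (-1, 1)` identifies `WithTop α` with `(-1, 1]`, the
new top element going to `1`. The half-open intervals `(2k - 1, 2k + 1]`, `k ∈ ℤ`, tile `ℝ`
in the lexicographic order, so `(k, t) ↦ 2k + t` is an order isomorphism
`ℤ ×ₗ (-1, 1] ≃o ℝ`.
-/

/-- The underlying linear orders of the basic group-like uninorms:
`U 0 = ℝ` and `U (n+1) = ℤ ×ₗ WithTop (U n)`. -/
def basicU : ℕ → Type
  | 0 => ℝ
  | n + 1 => ℤ ×ₗ WithTop (basicU n)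

noncomputable instance basicULinearOrder : ∀ n, LinearOrder (basicU n)
  | 0 => inferInstanceAs (LinearOrder ℝ)
  | n + 1 =>
      letI := basicULinearOrder n
      (inferInstance : LinearOrder (ℤ ×ₗ WithTop (basicU n)))

open Set

section WithTopIoo

variable {α : Type*} [LinearOrder α] {a b : α}

def withTopIooToIoc (hab : a < b) : WithTop (Ioo a b) → Ioc a b :=
  WithTop.recTopCoe ⟨b, right_mem_Ioc.2 hab⟩ (inclusion Ioo_subset_Ioc_self)

theorem strictMono_withTopIooToIoc (hab : a < b) : StrictMono (withTopIooToIoc hab) :=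
  WithTop.strictMono_iff.2 ⟨fun _ _ h => h, fun t => t.2.2⟩

theorem surjective_withTopIooToIoc (hab : a < b) : Function.Surjective (withTopIooToIoc hab) := by
  rintro ⟨t, hat, htb⟩
  rcases htb.eq_or_lt with rfl | htb
  · exact ⟨⊤, rfl⟩
  · exact ⟨(⟨t, hat, htb⟩ : Ioo a b), rfl⟩

noncomputable def withTopIooOrderIsoIoc (hab : a < b) : WithTop (Ioo a b) ≃o Ioc a b :=
  (strictMono_withTopIooToIoc hab).orderIsoOfSurjective _ (surjective_withTopIooToIoc hab)

end WithTopIoo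

section IntLex

variable {K : Type*} [Field K] [LinearOrder K] [IsStrictOrderedRing K] [FloorRing K] {a b : K}

def intLexIocToField (a b : K) (p : ℤ ×ₗ Ioc a b) : K := (ofLex p).1 * (b - a) + (ofLex p).2

theorem strictMono_intLexIocToField (hab : a < b) : StrictMono (intLexIocToField a b) := by
  rintro ⟨k, s⟩ ⟨l, t⟩ hlt
  rcases Prod.Lex.lt_iff.1 hlt with hkl | ⟨rfl, hst⟩
  · have hkl : (k : K) + 1 ≤ l := by exact_mod_cast hkl
    calc (k : K) * (b - a) + s ≤ (k + 1) * (b - a) + a := by linarith [s.2.2]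
      _ < l * (b - a) + t := by nlinarith [t.2.1]
  · exact add_lt_add_right (Subtype.coe_lt_coe.2 hst) _

theorem surjective_intLexIocToField (hab : a < b) :
    Function.Surjective (intLexIocToField a b) := by
  intro y
  have hba : 0 < b - a := sub_pos.2 hab
  set k : ℤ := ⌈(y - b) / (b - a)⌉
  have hk₁ : (y - b) / (b - a) ≤ k := Int.le_ceil _
  have hk₂ : (k : K) < (y - b) / (b - a) + 1 := Int.ceil_lt_add_one _
  rw [div_le_iff₀ hba] at hk₁
  rw [← sub_lt_iff_lt_add, lt_div_iff₀ hba] at hk₂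
  refine ⟨toLex (k, ⟨y - k * (b - a), by linarith, by linarith⟩), ?_⟩
  simp [intLexIocToField]

noncomputable def intLexIocOrderIso (hab : a < b) : ℤ ×ₗ Ioc a b ≃o K :=
  (strictMono_intLexIocToField hab).orderIsoOfSurjective _ (surjective_intLexIocToField hab)

noncomputable def intLexWithTopOrderIso {α : Type*} [LinearOrder α] (e : α ≃o K) :
    ℤ ×ₗ WithTop α ≃o K :=
  (Prod.Lex.prodLexCongr (OrderIso.refl ℤ)
      ((e.trans (orderIsoIooNegOneOne K)).withTopCongr.trans
        (withTopIooOrderIsoIoc (by norm_num)))).trans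
    (intLexIocOrderIso (by norm_num))

end IntLex

/-- every `basicU n` is order-isomorphic to `ℝ`. -/
theorem stmt_14 : ∀ n : ℕ, Nonempty (basicU n ≃o ℝ) := by
  intro n
  induction n with
  | zero => exact ⟨OrderIso.refl ℝ⟩
  | succ n ih => exact ih.map intLexWithTopOrderIso
end

section
/- On the lexicographic product ℤ ×ₗ WithTop ℝ define the operation (m, x) ∗ (n, y) = (m + n, x + y), where addition on WithTop ℝ is extended so that ⊤ + y = y + ⊤ = ⊤. Then ∗ is a commutative monoid operation with unit (0, 0) that is residuated (for all u, w the set {v : u ∗ v ≤ w} has a greatest element, denoted u→w), and, writing ¬u := u→(0,0), the identity ¬¬u = u holds for all u; explicitly, ¬(m, x) = (−m, −x) for x ∈ ℝ and ¬(m, ⊤) = (−m−1, ⊤). Hence ℤ ×ₗ WithTop ℝ with ∗ is an odd involutive residuated chain. -/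
/-!
`∗` is the coordinatewise addition of `ℤ ×ₗ WithTop ℝ`, so the monoid laws are inherited.
The residuated structure comes from a single negation `¬`: it is an involution and
`u ≤ ¬v ↔ u ∗ v ≤ (0,0)`, which a four-case check confirms (for `v = (n,⊤)` the right side
says `m + n < 0`, whence `¬(n,⊤) = (-n-1,⊤)`). Then `u ∗ v ≤ w = ¬¬w` iff `v ∗ (u ∗ ¬w) ≤ (0,0)`
iff `v ≤ ¬(u ∗ ¬w)`, so `u → w := ¬(u ∗ ¬w)` is the residual, and `u → (0,0) = ¬u`.
-/

/-- The coordinatewise monoidal operation on `ℤ ×ₗ WithTop ℝ`: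
`(m,x) ∗ (n,y) = (m+n, x+y)`, where on `WithTop ℝ` addition satisfies
`⊤ + y = y + ⊤ = ⊤`. -/
noncomputable def u1star (u v : ℤ ×ₗ WithTop ℝ) : ℤ ×ₗ WithTop ℝ :=
  toLex ((ofLex u).1 + (ofLex v).1, (ofLex u).2 + (ofLex v).2)

namespace IntLexWithTop

variable {G : Type*} [AddCommGroup G]

def neg (u : ℤ ×ₗ WithTop G) : ℤ ×ₗ WithTop G :=
  match ofLex u with
  | (m, (x : G)) => toLex (-m, ((-x : G) : WithTop G))
  | (m, ⊤) => toLex (-m - 1, ⊤)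

theorem neg_coe (m : ℤ) (x : G) :
    neg (toLex (m, (x : WithTop G))) = toLex (-m, ((-x : G) : WithTop G)) := rfl

theorem neg_top (m : ℤ) : neg (toLex (m, (⊤ : WithTop G))) = toLex (-m - 1, ⊤) := rfl

theorem neg_zero : neg (0 : ℤ ×ₗ WithTop G) = 0 := by
  change neg (toLex ((0 : ℤ), ((0 : G) : WithTop G))) = toLex (0, ((0 : G) : WithTop G))
  rw [neg_coe, _root_.neg_zero, _root_.neg_zero]

theorem neg_neg (u : ℤ ×ₗ WithTop G) : neg (neg u) = u := by
  obtain ⟨⟨m, a⟩, rfl⟩ := toLex.surjective u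
  induction a using WithTop.recTopCoe with
  | top => rw [neg_top, neg_top]; simp
  | coe x => rw [neg_coe, neg_coe, _root_.neg_neg, _root_.neg_neg]

def res (u w : ℤ ×ₗ WithTop G) : ℤ ×ₗ WithTop G := neg (u + neg w)

theorem res_zero (u : ℤ ×ₗ WithTop G) : res u 0 = neg u := by
  rw [res, neg_zero, add_zero]

section Order

variable [LinearOrder G] [IsOrderedAddMonoid G]

theorem le_neg_iff_add_nonpos (u v : ℤ ×ₗ WithTop G) : u ≤ neg v ↔ u + v ≤ 0 := by
  obtain ⟨⟨m, a⟩, rfl⟩ := toLex.surjective u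
  obtain ⟨⟨n, b⟩, rfl⟩ := toLex.surjective v
  induction a using WithTop.recTopCoe <;> induction b using WithTop.recTopCoe <;>
    simp only [neg_coe, neg_top, Prod.Lex.le_iff, ← toLex_add, ofLex_toLex, ofLex_zero,
      Prod.fst_zero, Prod.snd_zero, Prod.mk_add_mk,
      ← WithTop.coe_add, WithTop.coe_le_coe, WithTop.add_top, WithTop.top_add, WithTop.top_le_iff,
      ← WithTop.coe_zero, WithTop.coe_ne_top, le_top, le_neg_iff_add_nonpos_right,
      lt_neg_iff_add_neg, eq_neg_iff_add_eq_zero, and_true, and_false, or_false]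
  all_goals omega

theorem add_le_iff_le_res (u w v : ℤ ×ₗ WithTop G) : u + v ≤ w ↔ v ≤ res u w := by
  rw [res, le_neg_iff_add_nonpos, ← add_assoc, add_comm v, ← le_neg_iff_add_nonpos, neg_neg]

end Order

end IntLexWithTop

theorem u1star_eq_add (u v : ℤ ×ₗ WithTop ℝ) : u1star u v = u + v := rfl

/-- `ℤ ×ₗ WithTop ℝ` with the coordinatewise operation `∗` is an odd
involutive residuated chain with unit `(0,0)`: `∗` is commutative, associative, has unit
`(0,0)`, is residuated (`res u w` is the greatest `v` with `u ∗ v ≤ w`), the residual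
complement `¬u := res u (0,0)` is an involution, and explicitly `¬(m,x) = (−m,−x)` for
`x ∈ ℝ` and `¬(m,⊤) = (−m−1,⊤)`. -/
theorem stmt_15 :
    (∀ u v : ℤ ×ₗ WithTop ℝ, u1star u v = u1star v u) ∧
    (∀ u v w : ℤ ×ₗ WithTop ℝ, u1star (u1star u v) w = u1star u (u1star v w)) ∧
    (∀ u : ℤ ×ₗ WithTop ℝ, u1star u (toLex (0, (0 : WithTop ℝ))) = u) ∧
    ∃ res : (ℤ ×ₗ WithTop ℝ) → (ℤ ×ₗ WithTop ℝ) → (ℤ ×ₗ WithTop ℝ),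
      (∀ u w v, u1star u v ≤ w ↔ v ≤ res u w) ∧
      (∀ u, res (res u (toLex (0, (0 : WithTop ℝ)))) (toLex (0, (0 : WithTop ℝ))) = u) ∧
      (∀ (m : ℤ) (x : ℝ),
        res (toLex (m, (x : WithTop ℝ))) (toLex (0, (0 : WithTop ℝ))) =
          toLex (-m, ((-x : ℝ) : WithTop ℝ))) ∧
      (∀ m : ℤ,
        res (toLex (m, (⊤ : WithTop ℝ))) (toLex (0, (0 : WithTop ℝ))) =
          toLex (-m - 1, (⊤ : WithTop ℝ))) := by
  simp only [u1star_eq_add, Prod.mk_zero_zero, toLex_zero]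
  open IntLexWithTop in
  exact ⟨add_comm, add_assoc, add_zero, res, add_le_iff_le_res,
    fun u => by rw [res_zero, res_zero, IntLexWithTop.neg_neg],
    fun m x => by rw [res_zero, neg_coe],
    fun m => by rw [res_zero, neg_top]⟩
end
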